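/- arXiv:1903.11360 — 15 statements merged into one kernel-verified Lean document; each statement's English description precedes it below -/
import Mathlib

section
/- Suppose endowed valuations are given by v^X(Y) = v(Y) + g^X(X ∩ Y) for gain functions g^X : 2^X → ℝ. Then the loss aversion inequality v^{X∪Y}(X∪Y) - v^{X∪Y}(Y) ≥ v^Y(X∪Y) - v^Y(Y) holds for all X, Y ⊆ M if and only if every gain function is weakly monotone at the top, i.e., g^X(Z) ≤ g^X(X) for all Z ⊆ X ⊆ M. -/
/-!
Both endowed valuations add the same `v (X ∪ Y) - v Y`, and `g^Y` contributes nothing since `Y`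
meets both `X ∪ Y` and `Y` in `Y`; so loss aversion at `(X, Y)` says exactly
`g^{X ∪ Y}(Y) ≤ g^{X ∪ Y}(X ∪ Y)`. The pairs `(X ∪ Y, Y)` with `X, Y ⊆ M` are precisely the pairs
`(X, Z)` with `Z ⊆ X ⊆ M`.
-/

namespace Finset

variable {α : Type*} [DecidableEq α]

theorem forall_union_subset_iff_forall_subset {M : Finset α} {R : Finset α → Finset α → Prop} :
    (∀ X ⊆ M, ∀ Y ⊆ M, R (X ∪ Y) Y) ↔ ∀ X ⊆ M, ∀ Z ⊆ X, R X Z := by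
  constructor
  · intro h X hX Z hZ
    simpa only [union_eq_left.mpr hZ] using h X hX Z (hZ.trans hX)
  · intro h X hX Y hY
    exact h (X ∪ Y) (union_subset hX hY) Y subset_union_right

end Finset

open Finset in
theorem lossAversion_iff_gain_le_gain_union {α : Type*} [DecidableEq α] (v : Finset α → ℝ)
    (g : Finset α → Finset α → ℝ) (X Y : Finset α) :
    (v (X ∪ Y) + g (X ∪ Y) ((X ∪ Y) ∩ (X ∪ Y))) - (v Y + g (X ∪ Y) ((X ∪ Y) ∩ Y))
        ≥ (v (X ∪ Y) + g Y (Y ∩ (X ∪ Y))) - (v Y + g Y (Y ∩ Y)) ↔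
      g (X ∪ Y) Y ≤ g (X ∪ Y) (X ∪ Y) := by
  rw [inter_self, inter_eq_right.mpr subset_union_right, inter_eq_left.mpr subset_union_right,
    inter_self]
  constructor <;> intro h <;> linarith

/-- Loss aversion holds iff every gain function is weakly monotone at the top. -/
theorem stmt1 {α : Type*} [DecidableEq α] (M : Finset α)
    (v : Finset α → ℝ) (g : Finset α → Finset α → ℝ) :
    (∀ X ⊆ M, ∀ Y ⊆ M,
        (v (X ∪ Y) + g (X ∪ Y) ((X ∪ Y) ∩ (X ∪ Y)))
          - (v Y + g (X ∪ Y) ((X ∪ Y) ∩ Y))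
        ≥ (v (X ∪ Y) + g Y (Y ∩ (X ∪ Y))) - (v Y + g Y (Y ∩ Y))) ↔
    (∀ X ⊆ M, ∀ Z ⊆ X, g X Z ≤ g X X) := by
  simp only [lossAversion_iff_gain_le_gain_union]
  exact Finset.forall_union_subset_iff_forall_subset (R := fun X Z => g X Z ≤ g X X)
end

section
/- Let v : 2^M → ℝ be monotone, let g^X : 2^X → ℝ be a gain function, let p ∈ ℝ^M be item prices (with p(S) = Σ_{j∈S} p_j), and suppose X ⊆ M satisfies g^X(Z) - p(Z) ≤ g^X(X) - p(X) for all Z ⊆ X. Then for every Y ⊆ M, v^X(Y) - p(Y) ≤ v^X(X ∪ Y) - p(X ∪ Y), where v^X(Y) = v(Y) + g^X(X ∩ Y). In particular, any utility-maximizing deviation can be assumed to contain X. -/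
open Finset

lemma gain_inter_sub_sum_le {α : Type*} [DecidableEq α] (X Y : Finset α)
    (g : Finset α → ℝ) (p : α → ℝ)
    (hg : ∀ Z ⊆ X, g Z - ∑ j ∈ Z, p j ≤ g X - ∑ j ∈ X, p j) :
    g (X ∩ Y) - ∑ j ∈ Y, p j ≤ g X - ∑ j ∈ X ∪ Y, p j := by
  have hgain := hg (X ∩ Y) inter_subset_left
  have hprice : ∑ j ∈ X ∪ Y, p j + ∑ j ∈ X ∩ Y, p j = ∑ j ∈ X, p j + ∑ j ∈ Y, p j :=
    sum_union_inter
  linarith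

/-- Inward stability: if the gain function minus prices is maximized at `X`,
then moving from any `Y` to `X ∪ Y` weakly improves endowed utility. -/
theorem stmt2 {α : Type*} [DecidableEq α] (M X : Finset α) (hX : X ⊆ M)
    (v : Finset α → ℝ)
    (hmono : ∀ A B : Finset α, A ⊆ B → B ⊆ M → v A ≤ v B)
    (g : Finset α → ℝ) (p : α → ℝ)
    (hg : ∀ Z ⊆ X, g Z - ∑ j ∈ Z, p j ≤ g X - ∑ j ∈ X, p j) :
    ∀ Y ⊆ M,
      (v Y + g (X ∩ Y)) - ∑ j ∈ Y, p j ≤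
        (v (X ∪ Y) + g (X ∩ (X ∪ Y))) - ∑ j ∈ X ∪ Y, p j := by
  intro Y hY
  have hv : v Y ≤ v (X ∪ Y) := hmono Y (X ∪ Y) subset_union_right (union_subset hX hY)
  have hgain := gain_inter_sub_sum_le X Y g p hg
  rw [inter_eq_left.mpr subset_union_left]
  linarith
end

section
/- Stability preservation: let (S, p) be an E-endowment equilibrium with respect to valuations (v_1,…,v_n) and endowment environment E = (E_1,…,E_n), and let Ê be an endowment environment such that for each consumer i and each Z ⊆ S_i, g_i^{S_i}(Z | S_i \ Z) ≤ ĝ_i^{S_i}(Z | S_i \ Z). Then (S, p) is also an Ê-endowment equilibrium. -/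
/-- Moving from the endowment `X` to `Y` forfeits the gain `g (X \ Y | X ∩ Y)`, so a larger
forfeited gain only makes the deviation less attractive. -/
theorem add_gain_inter_le_of_loss_le {α : Type*} [DecidableEq α] {X Y : Finset α} {a b : ℝ}
    {g ĝ : Finset α → ℝ} (hstable : b + g (X ∩ Y) ≤ a + g X)
    (hloss : g X - g (X \ (X \ Y)) ≤ ĝ X - ĝ (X \ (X \ Y))) :
    b + ĝ (X ∩ Y) ≤ a + ĝ X := by
  rw [Finset.sdiff_sdiff_self_left] at hloss
  linarith

theorem stmt6_general {α ι : Type*} [DecidableEq α]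
    (M : Finset α) (v : ι → Finset α → ℝ)
    (S : ι → Finset α) (p : α → ℝ)
    (g ghat : ι → Finset α → Finset α → ℝ)
    (heq : ∀ i, ∀ Y ⊆ M,
      v i (S i) + g i (S i) (S i ∩ S i) - ∑ j ∈ S i, p j ≥
        v i Y + g i (S i) (S i ∩ Y) - ∑ j ∈ Y, p j)
    (hdom : ∀ i, ∀ Z ⊆ S i,
      g i (S i) (S i) - g i (S i) (S i \ Z) ≤
        ghat i (S i) (S i) - ghat i (S i) (S i \ Z)) :
    ∀ i, ∀ Y ⊆ M,
      v i (S i) + ghat i (S i) (S i ∩ S i) - ∑ j ∈ S i, p j ≥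
        v i Y + ghat i (S i) (S i ∩ Y) - ∑ j ∈ Y, p j := by
  intro i Y hY
  have hstable := heq i Y hY
  rw [Finset.inter_self] at hstable ⊢
  have := add_gain_inter_le_of_loss_le (a := v i (S i) - ∑ j ∈ S i, p j)
    (b := v i Y - ∑ j ∈ Y, p j) (by linarith) (hdom i (S i \ Y) Finset.sdiff_subset)
  linarith

/-- Stability preservation: an endowment equilibrium for gains `g` remains an
endowment equilibrium for any gains `ghat` dominating `g` in the loss-aversion
partial order (on the equilibrium bundles). -/
theorem stmt6 {α ι : Type*} [DecidableEq α] [DecidableEq ι] [Fintype ι]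
    (M : Finset α) (v : ι → Finset α → ℝ)
    (S : ι → Finset α) (p : α → ℝ)
    (g ghat : ι → Finset α → Finset α → ℝ)
    (hS : ∀ i, S i ⊆ M)
    (hclear : Finset.univ.biUnion S = M)
    (hdisj : ∀ i j, i ≠ j → Disjoint (S i) (S j))
    (heq : ∀ i, ∀ Y ⊆ M,
      v i (S i) + g i (S i) (S i ∩ S i) - ∑ j ∈ S i, p j ≥
        v i Y + g i (S i) (S i ∩ Y) - ∑ j ∈ Y, p j)
    (hdom : ∀ i, ∀ Z ⊆ S i,
      g i (S i) (S i) - g i (S i) (S i \ Z) ≤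
        ghat i (S i) (S i) - ghat i (S i) (S i \ Z)) :
    ∀ i, ∀ Y ⊆ M,
      v i (S i) + ghat i (S i) (S i ∩ S i) - ∑ j ∈ S i, p j ≥
        v i Y + ghat i (S i) (S i ∩ Y) - ∑ j ∈ Y, p j :=
  stmt6_general M v S p g ghat heq hdom
end

section
/- If (S, p) is an E-endowment equilibrium for valuations (v_1,…,v_n) with nonnegative gain functions, and for each i it holds that g_i^{S_i}(S_i) ≤ v_i(S_i), then the social welfare of S is at least half the value of any feasible fractional solution of the configuration LP: 2·Σ_i v_i(S_i) ≥ Σ_i Σ_{T⊆M} x_{i,T}·v_i(T) for every feasible fractional allocation x. -/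
/-! The equilibrium prices together with the agent surpluses `A i = 2 v_i(S_i) - p(S_i)` form a
feasible solution of the dual of the configuration LP: demand at the endowed valuation, with
`0 ≤ g` and `g_i(S_i) ≤ v_i(S_i)`, gives `v_i(T) ≤ A i + p(T)` for every bundle `T`, and `T = ∅`
gives `0 ≤ A i`. Weak duality bounds the LP value by `∑ A i + p(M)`, which is `2 ∑ v_i(S_i)`
because the `S_i` partition `M`. -/

open Finset

section

variable {α ι : Type*} [DecidableEq α]

theorem le_two_mul_sub_add_of_endowed_demand {v : Finset α → ℝ} {gain : Finset α → ℝ}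
    {p : α → ℝ} {S T : Finset α}
    (hdemand : v S + gain S - ∑ j ∈ S, p j ≥ v T + gain (S ∩ T) - ∑ j ∈ T, p j)
    (hgain_nonneg : 0 ≤ gain (S ∩ T)) (hgain_le : gain S ≤ v S) :
    v T ≤ 2 * v S - ∑ j ∈ S, p j + ∑ j ∈ T, p j := by
  linarith

theorem sum_sum_mul_sum_le_of_load_le_one [Fintype ι] (M : Finset α) (p : α → ℝ)
    (hp : ∀ j, 0 ≤ p j) (x : ι → Finset α → ℝ)
    (hload : ∀ j ∈ M, ∑ i, ∑ T ∈ M.powerset, (if j ∈ T then x i T else 0) ≤ 1) :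
    ∑ i, ∑ T ∈ M.powerset, x i T * ∑ j ∈ T, p j ≤ ∑ j ∈ M, p j := by
  have hswap : ∀ i, ∑ T ∈ M.powerset, x i T * ∑ j ∈ T, p j =
      ∑ j ∈ M, (∑ T ∈ M.powerset, if j ∈ T then x i T else 0) * p j := by
    intro i
    simp only [mul_sum, sum_mul, ← sum_filter]
    exact sum_comm' fun T j => by
      simp only [mem_powerset, mem_filter]
      exact ⟨fun ⟨hT, hj⟩ => ⟨⟨hT, hj⟩, hT hj⟩, fun ⟨⟨hT, hj⟩, _⟩ => ⟨hT, hj⟩⟩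
  calc ∑ i, ∑ T ∈ M.powerset, x i T * ∑ j ∈ T, p j
      = ∑ j ∈ M, (∑ i, ∑ T ∈ M.powerset, if j ∈ T then x i T else 0) * p j := by
        simp only [hswap, sum_mul]
        exact sum_comm
    _ ≤ ∑ j ∈ M, p j :=
        sum_le_sum fun j hj => mul_le_of_le_one_left (hp j) (hload j hj)

theorem configLP_value_le_dual [Fintype ι] (M : Finset α) (v : ι → Finset α → ℝ)
    (A : ι → ℝ) (p : α → ℝ) (hA : ∀ i, 0 ≤ A i) (hp : ∀ j, 0 ≤ p j)
    (hdual : ∀ i, ∀ T ⊆ M, v i T ≤ A i + ∑ j ∈ T, p j)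
    (x : ι → Finset α → ℝ) (hxnn : ∀ i T, 0 ≤ x i T)
    (hitem : ∀ j ∈ M, ∑ i, ∑ T ∈ M.powerset, (if j ∈ T then x i T else 0) ≤ 1)
    (hcons : ∀ i, ∑ T ∈ M.powerset, x i T ≤ 1) :
    ∑ i, ∑ T ∈ M.powerset, x i T * v i T ≤ ∑ i, A i + ∑ j ∈ M, p j := by
  calc ∑ i, ∑ T ∈ M.powerset, x i T * v i T
      ≤ ∑ i, ∑ T ∈ M.powerset, x i T * (A i + ∑ j ∈ T, p j) :=
        sum_le_sum fun i _ => sum_le_sum fun T hT =>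
          mul_le_mul_of_nonneg_left (hdual i T (mem_powerset.mp hT)) (hxnn i T)
    _ = ∑ i, (∑ T ∈ M.powerset, x i T) * A i
          + ∑ i, ∑ T ∈ M.powerset, x i T * ∑ j ∈ T, p j := by
        simp only [mul_add, sum_add_distrib, sum_mul]
    _ ≤ ∑ i, A i + ∑ j ∈ M, p j :=
        add_le_add (sum_le_sum fun i _ => mul_le_of_le_one_left (hA i) (hcons i))
          (sum_sum_mul_sum_le_of_load_le_one M p hp x hitem)

end

theorem stmt7_general {α ι : Type*} [DecidableEq α] [Fintype ι]
    (M : Finset α) (v : ι → Finset α → ℝ)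
    (S : ι → Finset α) (p : α → ℝ)
    (g : ι → Finset α → Finset α → ℝ)
    (hclear : Finset.univ.biUnion S = M)
    (hdisj : ∀ i j, i ≠ j → Disjoint (S i) (S j))
    (hv0 : ∀ i, v i ∅ = 0)
    (hp : ∀ j, 0 ≤ p j)
    (hgnn : ∀ i X Z, 0 ≤ g i X Z)
    (hgle : ∀ i, g i (S i) (S i) ≤ v i (S i))
    (heq : ∀ i, ∀ Y ⊆ M,
      v i (S i) + g i (S i) (S i ∩ S i) - ∑ j ∈ S i, p j ≥
        v i Y + g i (S i) (S i ∩ Y) - ∑ j ∈ Y, p j)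
    (x : ι → Finset α → ℝ)
    (hxnn : ∀ i T, 0 ≤ x i T)
    (hitem : ∀ j ∈ M, ∑ i, ∑ T ∈ M.powerset, (if j ∈ T then x i T else 0) ≤ 1)
    (hcons : ∀ i, ∑ T ∈ M.powerset, x i T ≤ 1) :
    2 * ∑ i, v i (S i) ≥ ∑ i, ∑ T ∈ M.powerset, x i T * v i T := by
  have hdual : ∀ i, ∀ T ⊆ M, v i T ≤ 2 * v i (S i) - ∑ j ∈ S i, p j + ∑ j ∈ T, p j :=
    fun i T hT => le_two_mul_sub_add_of_endowed_demand (gain := g i (S i))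
      (by simpa only [inter_self] using heq i T hT) (hgnn i _ _) (hgle i)
  have hsurplus : ∀ i, 0 ≤ 2 * v i (S i) - ∑ j ∈ S i, p j := fun i => by
    simpa [hv0] using hdual i ∅ (empty_subset M)
  have hpartition : ∑ j ∈ M, p j = ∑ i, ∑ j ∈ S i, p j := by
    rw [← hclear, sum_biUnion fun i _ j _ hij => hdisj i j hij]
  calc ∑ i, ∑ T ∈ M.powerset, x i T * v i T
      ≤ ∑ i, (2 * v i (S i) - ∑ j ∈ S i, p j) + ∑ j ∈ M, p j :=
        configLP_value_le_dual M v _ p hsurplus hp hdual x hxnn hitem hcons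
    _ = 2 * ∑ i, v i (S i) := by
        rw [hpartition, sum_sub_distrib, mul_sum]
        ring

/-- An endowment equilibrium with nonnegative gains satisfying
`g_i^{S_i}(S_i) ≤ v_i(S_i)` achieves at least half the value of any feasible
fractional solution of the configuration LP. -/
theorem stmt7 {α ι : Type*} [DecidableEq α] [DecidableEq ι] [Fintype ι]
    (M : Finset α) (v : ι → Finset α → ℝ)
    (S : ι → Finset α) (p : α → ℝ)
    (g : ι → Finset α → Finset α → ℝ)
    (hS : ∀ i, S i ⊆ M)
    (hclear : Finset.univ.biUnion S = M)
    (hdisj : ∀ i j, i ≠ j → Disjoint (S i) (S j))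
    (hv0 : ∀ i, v i ∅ = 0)
    (hp : ∀ j, 0 ≤ p j)
    (hgnn : ∀ i X Z, 0 ≤ g i X Z)
    (hg0 : ∀ i X, g i X ∅ = 0)
    (hgle : ∀ i, g i (S i) (S i) ≤ v i (S i))
    (heq : ∀ i, ∀ Y ⊆ M,
      v i (S i) + g i (S i) (S i ∩ S i) - ∑ j ∈ S i, p j ≥
        v i Y + g i (S i) (S i ∩ Y) - ∑ j ∈ Y, p j)
    (x : ι → Finset α → ℝ)
    (hxnn : ∀ i T, 0 ≤ x i T)
    (hitem : ∀ j ∈ M, ∑ i, ∑ T ∈ M.powerset, (if j ∈ T then x i T else 0) ≤ 1)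
    (hcons : ∀ i, ∑ T ∈ M.powerset, x i T ≤ 1) :
    2 * ∑ i, v i (S i) ≥ ∑ i, ∑ T ∈ M.powerset, x i T * v i T :=
  stmt7_general M v S p g hclear hdisj hv0 hp hgnn hgle heq x hxnn hitem hcons
end

section
/- If (S, p) is an E-endowment equilibrium for an instance (v_1,…,v_n) and, for every consumer i, p(S_i) ≤ v_i(S_i), then (S, p) is a conditional equilibrium: it is individually rational, all items are allocated, and for every consumer i and every X ⊆ M \ S_i, v_i(X | S_i) ≤ p(X). -/
/-! The endowment `g (S ∩ Y)` is the same for `Y = S` and for every `Y ⊇ S`, so comparing the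
endowed utility of `S i` with that of `X ∪ S i` is exactly outward stability. -/

theorem sub_le_sum_of_endowed_utility_le {α : Type*} [DecidableEq α]
    (v g : Finset α → ℝ) (p : α → ℝ) {S X : Finset α} (hXS : Disjoint X S)
    (hopt : v (X ∪ S) + g (S ∩ (X ∪ S)) - ∑ j ∈ X ∪ S, p j ≤ v S + g (S ∩ S) - ∑ j ∈ S, p j) :
    v (X ∪ S) - v S ≤ ∑ j ∈ X, p j := by
  rw [Finset.inter_eq_left.mpr Finset.subset_union_right, Finset.inter_self, Finset.sum_union hXS] at hopt
  linarith

theorem stmt8_general {α ι : Type*} [DecidableEq α] [Fintype ι]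
    (M : Finset α) (v : ι → Finset α → ℝ)
    (S : ι → Finset α) (p : α → ℝ)
    (g : ι → Finset α → Finset α → ℝ)
    (hS : ∀ i, S i ⊆ M)
    (hclear : Finset.univ.biUnion S = M)
    (heq : ∀ i, ∀ Y ⊆ M,
      v i (S i) + g i (S i) (S i ∩ S i) - ∑ j ∈ S i, p j ≥
        v i Y + g i (S i) (S i ∩ Y) - ∑ j ∈ Y, p j)
    (hIR : ∀ i, ∑ j ∈ S i, p j ≤ v i (S i)) :
    (∀ i, ∑ j ∈ S i, p j ≤ v i (S i)) ∧
    (Finset.univ.biUnion S = M) ∧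
    (∀ i, ∀ X ⊆ M \ S i, v i (X ∪ S i) - v i (S i) ≤ ∑ j ∈ X, p j) := by
  refine ⟨hIR, hclear, fun i X hX => ?_⟩
  have hXS : Disjoint X (S i) := Finset.disjoint_of_subset_left hX Finset.sdiff_disjoint
  have hXSM : X ∪ S i ⊆ M := Finset.union_subset (hX.trans Finset.sdiff_subset) (hS i)
  exact sub_le_sum_of_endowed_utility_le (v i) (g i (S i)) p hXS (heq i _ hXSM)

/-- An endowment equilibrium that is individually rational with respect to the
original valuations is a conditional equilibrium. -/
theorem stmt8 {α ι : Type*} [DecidableEq α] [DecidableEq ι] [Fintype ι]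
    (M : Finset α) (v : ι → Finset α → ℝ)
    (S : ι → Finset α) (p : α → ℝ)
    (g : ι → Finset α → Finset α → ℝ)
    (hS : ∀ i, S i ⊆ M)
    (hclear : Finset.univ.biUnion S = M)
    (hdisj : ∀ i j, i ≠ j → Disjoint (S i) (S j))
    (heq : ∀ i, ∀ Y ⊆ M,
      v i (S i) + g i (S i) (S i ∩ S i) - ∑ j ∈ S i, p j ≥
        v i Y + g i (S i) (S i ∩ Y) - ∑ j ∈ Y, p j)
    (hIR : ∀ i, ∑ j ∈ S i, p j ≤ v i (S i)) :
    (∀ i, ∑ j ∈ S i, p j ≤ v i (S i)) ∧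
    (Finset.univ.biUnion S = M) ∧
    (∀ i, ∀ X ⊆ M \ S i, v i (X ∪ S i) - v i (S i) ≤ ∑ j ∈ X, p j) :=
  stmt8_general M v S p g hS hclear heq hIR
end

section
/- Let (S, p) be a conditional equilibrium for monotone valuations (v_1,…,v_n), and suppose the endowment environment E satisfies, for every consumer i and Z ⊆ S_i, g_i^{S_i}(Z) - p(Z) ≤ g_i^{S_i}(S_i) - p(S_i). Then (S, p) is an E-endowment equilibrium. -/
open Finset

theorem valuation_sub_sum_sdiff_le_of_outward_stable {α : Type*} [DecidableEq α]
    {M S Y : Finset α} {v : Finset α → ℝ} {p : α → ℝ} (hS : S ⊆ M) (hY : Y ⊆ M)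
    (hmono : ∀ A B : Finset α, A ⊆ B → B ⊆ M → v A ≤ v B)
    (hout : ∀ X ⊆ M \ S, v (X ∪ S) - v S ≤ ∑ j ∈ X, p j) :
    v Y - ∑ j ∈ Y \ S, p j ≤ v S := by
  have hstable := hout (Y \ S) (sdiff_subset_sdiff hY subset_rfl)
  have hgrow : v Y ≤ v (Y \ S ∪ S) := by
    rw [sdiff_union_self_eq_union]
    exact hmono _ _ subset_union_left (union_subset hY hS)
  linarith

theorem stmt9_general {α ι : Type*} [DecidableEq α]
    (M : Finset α) (v : ι → Finset α → ℝ)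
    (S : ι → Finset α) (p : α → ℝ)
    (g : ι → Finset α → Finset α → ℝ)
    (hS : ∀ i, S i ⊆ M)
    (hmono : ∀ i, ∀ A B : Finset α, A ⊆ B → B ⊆ M → v i A ≤ v i B)
    (hout : ∀ i, ∀ X ⊆ M \ S i, v i (X ∪ S i) - v i (S i) ≤ ∑ j ∈ X, p j)
    (hg : ∀ i, ∀ Z ⊆ S i,
      g i (S i) Z - ∑ j ∈ Z, p j ≤ g i (S i) (S i) - ∑ j ∈ S i, p j) :
    ∀ i, ∀ Y ⊆ M,
      v i Y + g i (S i) (S i ∩ Y) - ∑ j ∈ Y, p j ≤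
        v i (S i) + g i (S i) (S i) - ∑ j ∈ S i, p j := by
  intro i Y hY
  have hvalue := valuation_sub_sum_sdiff_le_of_outward_stable (hS i) hY (hmono i) (hout i)
  have hgain := hg i (S i ∩ Y) inter_subset_left
  have hsplit : ∑ j ∈ S i ∩ Y, p j + ∑ j ∈ Y \ S i, p j = ∑ j ∈ Y, p j := by
    rw [inter_comm]
    exact sum_inter_add_sum_sdiff Y (S i) p
  linarith

/-- A conditional equilibrium whose gain functions satisfy the price
condition `g(Z) - p(Z) ≤ g(S_i) - p(S_i)` is an endowment equilibrium. -/
theorem stmt9 {α ι : Type*} [DecidableEq α] [DecidableEq ι] [Fintype ι]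
    (M : Finset α) (v : ι → Finset α → ℝ)
    (S : ι → Finset α) (p : α → ℝ)
    (g : ι → Finset α → Finset α → ℝ)
    (hS : ∀ i, S i ⊆ M)
    (hmono : ∀ i, ∀ A B : Finset α, A ⊆ B → B ⊆ M → v i A ≤ v i B)
    (hclear : Finset.univ.biUnion S = M)
    (hdisj : ∀ i j, i ≠ j → Disjoint (S i) (S j))
    (hIR : ∀ i, ∑ j ∈ S i, p j ≤ v i (S i))
    (hout : ∀ i, ∀ X ⊆ M \ S i, v i (X ∪ S i) - v i (S i) ≤ ∑ j ∈ X, p j)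
    (hg : ∀ i, ∀ Z ⊆ S i,
      g i (S i) Z - ∑ j ∈ Z, p j ≤ g i (S i) (S i) - ∑ j ∈ S i, p j) :
    ∀ i, ∀ Y ⊆ M,
      v i Y + g i (S i) (S i ∩ Y) - ∑ j ∈ Y, p j ≤
        v i (S i) + g i (S i) (S i) - ∑ j ∈ S i, p j :=
  stmt9_general M v S p g hS hmono hout hg
end

section
/- Every conditional equilibrium (S, p) is an E^AON-endowment equilibrium, where the all-or-nothing endowment effect has gain functions g^X(Z) = v(X) if Z = X and g^X(Z) = 0 otherwise. -/
/-!
If the bundle `Y` contains `S i`, the endowment bonus `v i (S i)` appears on both sides, and the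
conditional-equilibrium bound for the extra items `X = Y \ S i` says that `Y` is no better than
`S i` at prices `p`. Otherwise the bonus is lost; monotonicity and the same bound give
`v i Y - p(Y) ≤ v i (S i)`, and individual rationality `p(S i) ≤ v i (S i)` finishes.
-/

open Finset

section

variable {α : Type*} [DecidableEq α] {M S Y : Finset α} {v : Finset α → ℝ} {p : α → ℝ}

lemma sub_sum_le_sub_sum_of_superset
    (hout : ∀ X ⊆ M \ S, v (X ∪ S) - v S ≤ ∑ j ∈ X, p j) (hSY : S ⊆ Y) (hY : Y ⊆ M) :
    v Y - ∑ j ∈ Y, p j ≤ v S - ∑ j ∈ S, p j := by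
  have hmarg := hout (Y \ S) (sdiff_subset_sdiff hY le_rfl)
  rw [sdiff_union_of_subset hSY] at hmarg
  have hsum : ∑ j ∈ Y \ S, p j + ∑ j ∈ S, p j = ∑ j ∈ Y, p j := sum_sdiff hSY
  linarith

lemma le_add_sum_sdiff_of_mono
    (hmono : ∀ A B : Finset α, A ⊆ B → B ⊆ M → v A ≤ v B) (hS : S ⊆ M)
    (hout : ∀ X ⊆ M \ S, v (X ∪ S) - v S ≤ ∑ j ∈ X, p j) (hY : Y ⊆ M) :
    v Y ≤ v S + ∑ j ∈ Y \ S, p j := by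
  have hmarg := hout (Y \ S) (sdiff_subset_sdiff hY le_rfl)
  have hvY : v Y ≤ v (Y \ S ∪ S) := by
    rw [sdiff_union_self_eq_union]
    exact hmono _ _ subset_union_left (union_subset hY hS)
  linarith

lemma sub_sum_le_of_mono
    (hmono : ∀ A B : Finset α, A ⊆ B → B ⊆ M → v A ≤ v B) (hp : ∀ j, 0 ≤ p j) (hS : S ⊆ M)
    (hout : ∀ X ⊆ M \ S, v (X ∪ S) - v S ≤ ∑ j ∈ X, p j) (hY : Y ⊆ M) :
    v Y - ∑ j ∈ Y, p j ≤ v S := by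
  have hvY := le_add_sum_sdiff_of_mono hmono hS hout hY
  have hsum : ∑ j ∈ Y \ S, p j ≤ ∑ j ∈ Y, p j :=
    sum_le_sum_of_subset_of_nonneg sdiff_subset fun j _ _ => hp j
  linarith

end

theorem stmt10_general {α ι : Type*} [DecidableEq α]
    (M : Finset α) (v : ι → Finset α → ℝ)
    (S : ι → Finset α) (p : α → ℝ)
    (hS : ∀ i, S i ⊆ M)
    (hmono : ∀ i, ∀ A B : Finset α, A ⊆ B → B ⊆ M → v i A ≤ v i B)
    (hp : ∀ j, 0 ≤ p j)
    (hIR : ∀ i, ∑ j ∈ S i, p j ≤ v i (S i))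
    (hout : ∀ i, ∀ X ⊆ M \ S i, v i (X ∪ S i) - v i (S i) ≤ ∑ j ∈ X, p j) :
    ∀ i, ∀ Y ⊆ M,
      v i Y + (if S i ∩ Y = S i then v i (S i) else 0) - ∑ j ∈ Y, p j ≤
        v i (S i) + v i (S i) - ∑ j ∈ S i, p j := by
  intro i Y hY
  split_ifs with hSY
  · have := sub_sum_le_sub_sum_of_superset (hout i) (inter_eq_left.mp hSY) hY
    linarith
  · have := sub_sum_le_of_mono (hmono i) hp (hS i) (hout i) hY
    linarith [hIR i]

/-- Every conditional equilibrium is an endowment equilibrium with respect to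
the all-or-nothing endowment effect. -/
theorem stmt10 {α ι : Type*} [DecidableEq α] [DecidableEq ι] [Fintype ι]
    (M : Finset α) (v : ι → Finset α → ℝ)
    (S : ι → Finset α) (p : α → ℝ)
    (hS : ∀ i, S i ⊆ M)
    (hmono : ∀ i, ∀ A B : Finset α, A ⊆ B → B ⊆ M → v i A ≤ v i B)
    (hp : ∀ j, 0 ≤ p j)
    (hclear : Finset.univ.biUnion S = M)
    (hdisj : ∀ i j, i ≠ j → Disjoint (S i) (S j))
    (hIR : ∀ i, ∑ j ∈ S i, p j ≤ v i (S i))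
    (hout : ∀ i, ∀ X ⊆ M \ S i, v i (X ∪ S i) - v i (S i) ≤ ∑ j ∈ X, p j) :
    ∀ i, ∀ Y ⊆ M,
      v i Y + (if S i ∩ Y = S i then v i (S i) else 0) - ∑ j ∈ Y, p j ≤
        v i (S i) + v i (S i) - ∑ j ∈ S i, p j :=
  stmt10_general M v S p hS hmono hp hIR hout
end

section
/- Every conditional equilibrium achieves at least half the optimal fractional social welfare: if (S, p) is a conditional equilibrium for (v_1,…,v_n), then 2·Σ_i v_i(S_i) ≥ OPT_frac, where OPT_frac is the optimal value of the configuration LP. -/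
/-!
The equilibrium yields a feasible solution of the dual of the configuration LP: put `y i = v i (S i)`
on consumers and the equilibrium prices on items. Dual feasibility `v i T ≤ v i (S i) + p(T)` is
outward stability applied to `T \ S i` together with monotonicity; prices are nonnegative because,
once there are two consumers, every item lies outside some consumer's bundle. By weak duality the
LP value is at most `∑ i, v i (S i) + p(M)`, and `p(M) ≤ ∑ i, v i (S i)` by market clearance and
individual rationality. With a single consumer prices may be negative, but then `S i = M` and the
dual `(v i (S i), 0)` works.
-/

open Finset

theorem sum_powerset_mul_sum_eq {α : Type*} [DecidableEq α] (M : Finset α) (x : Finset α → ℝ)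
    (q : α → ℝ) :
    ∑ T ∈ M.powerset, x T * ∑ j ∈ T, q j =
      ∑ j ∈ M, (∑ T ∈ M.powerset, if j ∈ T then x T else 0) * q j := by
  have hT : ∀ T ∈ M.powerset, x T * ∑ j ∈ T, q j = ∑ j ∈ M, (if j ∈ T then x T else 0) * q j := by
    intro T hT
    have hsum : ∑ j ∈ T, q j = ∑ j ∈ M, if j ∈ T then q j else 0 := by
      rw [sum_ite_mem, inter_eq_right.mpr (mem_powerset.mp hT)]
    rw [hsum, mul_sum]
    exact sum_congr rfl fun j _ => by split_ifs <;> simp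
  rw [sum_congr rfl hT, sum_comm]
  simp only [sum_mul]

theorem configLP_le_dual {α ι : Type*} [DecidableEq α] [Fintype ι] (M : Finset α)
    (v x : ι → Finset α → ℝ) (y : ι → ℝ) (q : α → ℝ)
    (hxnn : ∀ i T, 0 ≤ x i T)
    (hitem : ∀ j ∈ M, ∑ i, ∑ T ∈ M.powerset, (if j ∈ T then x i T else 0) ≤ 1)
    (hcons : ∀ i, ∑ T ∈ M.powerset, x i T ≤ 1)
    (hy : ∀ i, 0 ≤ y i) (hq : ∀ j ∈ M, 0 ≤ q j)
    (hdual : ∀ i, ∀ T ⊆ M, v i T ≤ y i + ∑ j ∈ T, q j) :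
    ∑ i, ∑ T ∈ M.powerset, x i T * v i T ≤ ∑ i, y i + ∑ j ∈ M, q j := by
  have hconsumers : ∑ i, (∑ T ∈ M.powerset, x i T) * y i ≤ ∑ i, y i :=
    sum_le_sum fun i _ => mul_le_of_le_one_left (hy i) (hcons i)
  have hitems : ∑ i, ∑ T ∈ M.powerset, x i T * ∑ j ∈ T, q j ≤ ∑ j ∈ M, q j := by
    simp only [sum_powerset_mul_sum_eq]
    rw [sum_comm]
    simp only [← sum_mul]
    exact sum_le_sum fun j hj => mul_le_of_le_one_left (hq j hj) (hitem j hj)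
  calc ∑ i, ∑ T ∈ M.powerset, x i T * v i T
      ≤ ∑ i, ∑ T ∈ M.powerset, x i T * (y i + ∑ j ∈ T, q j) :=
        sum_le_sum fun i _ => sum_le_sum fun T hT =>
          mul_le_mul_of_nonneg_left (hdual i T (mem_powerset.mp hT)) (hxnn i T)
    _ = ∑ i, (∑ T ∈ M.powerset, x i T) * y i
          + ∑ i, ∑ T ∈ M.powerset, x i T * ∑ j ∈ T, q j := by
        simp only [mul_add, sum_add_distrib, sum_mul]
    _ ≤ ∑ i, y i + ∑ j ∈ M, q j := add_le_add hconsumers hitems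

section ConditionalEquilibrium

variable {α ι : Type*} [DecidableEq α] {M : Finset α} {v : ι → Finset α → ℝ}
  {S : ι → Finset α} {p : α → ℝ}

theorem price_nonneg_of_mem_sdiff (hS : ∀ i, S i ⊆ M)
    (hmono : ∀ i, ∀ A B : Finset α, A ⊆ B → B ⊆ M → v i A ≤ v i B)
    (hout : ∀ i, ∀ X ⊆ M \ S i, v i (X ∪ S i) - v i (S i) ≤ ∑ j ∈ X, p j)
    {i : ι} {j : α} (hj : j ∈ M \ S i) : 0 ≤ p j := by
  have hstable := hout i {j} (singleton_subset_iff.mpr hj)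
  have hgain : v i (S i) ≤ v i ({j} ∪ S i) :=
    hmono i _ _ subset_union_right
      (union_subset (singleton_subset_iff.mpr (mem_sdiff.mp hj).1) (hS i))
  rw [sum_singleton] at hstable
  linarith

theorem price_nonneg [Nontrivial ι] (hS : ∀ i, S i ⊆ M)
    (hmono : ∀ i, ∀ A B : Finset α, A ⊆ B → B ⊆ M → v i A ≤ v i B)
    (hdisj : ∀ i j, i ≠ j → Disjoint (S i) (S j))
    (hout : ∀ i, ∀ X ⊆ M \ S i, v i (X ∪ S i) - v i (S i) ≤ ∑ j ∈ X, p j)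
    {j : α} (hj : j ∈ M) : 0 ≤ p j := by
  obtain ⟨i₁, i₂, hne⟩ := exists_pair_ne ι
  by_cases h₁ : j ∈ S i₁
  · have h₂ : j ∉ S i₂ := disjoint_left.mp (hdisj i₁ i₂ hne) h₁
    exact price_nonneg_of_mem_sdiff hS hmono hout (mem_sdiff.mpr ⟨hj, h₂⟩)
  · exact price_nonneg_of_mem_sdiff hS hmono hout (mem_sdiff.mpr ⟨hj, h₁⟩)

theorem value_le_value_add_price (hS : ∀ i, S i ⊆ M)
    (hmono : ∀ i, ∀ A B : Finset α, A ⊆ B → B ⊆ M → v i A ≤ v i B)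
    (hout : ∀ i, ∀ X ⊆ M \ S i, v i (X ∪ S i) - v i (S i) ≤ ∑ j ∈ X, p j)
    (hp : ∀ j ∈ M, 0 ≤ p j) (i : ι) {T : Finset α} (hT : T ⊆ M) :
    v i T ≤ v i (S i) + ∑ j ∈ T, p j := by
  have hunion : v i T ≤ v i (T ∪ S i) :=
    hmono i _ _ subset_union_left (union_subset hT (hS i))
  have hstable := hout i (T \ S i) (sdiff_subset_sdiff hT subset_rfl)
  rw [sdiff_union_self_eq_union] at hstable
  have hprice : ∑ j ∈ T \ S i, p j ≤ ∑ j ∈ T, p j :=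
    sum_le_sum_of_subset_of_nonneg sdiff_subset fun j hj _ => hp j (hT hj)
  linarith

theorem sum_price_le_welfare [Fintype ι] (hclear : univ.biUnion S = M)
    (hdisj : ∀ i j, i ≠ j → Disjoint (S i) (S j))
    (hIR : ∀ i, ∑ j ∈ S i, p j ≤ v i (S i)) :
    ∑ j ∈ M, p j ≤ ∑ i, v i (S i) := by
  rw [← hclear, sum_biUnion fun i _ k _ hik => hdisj i k hik]
  exact sum_le_sum fun i _ => hIR i

end ConditionalEquilibrium

theorem stmt11_general {α ι : Type*} [DecidableEq α] [Fintype ι]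
    (M : Finset α) (v : ι → Finset α → ℝ)
    (S : ι → Finset α) (p : α → ℝ)
    (hS : ∀ i, S i ⊆ M)
    (hmono : ∀ i, ∀ A B : Finset α, A ⊆ B → B ⊆ M → v i A ≤ v i B)
    (hv0 : ∀ i, v i ∅ = 0)
    (hclear : Finset.univ.biUnion S = M)
    (hdisj : ∀ i j, i ≠ j → Disjoint (S i) (S j))
    (hIR : ∀ i, ∑ j ∈ S i, p j ≤ v i (S i))
    (hout : ∀ i, ∀ X ⊆ M \ S i, v i (X ∪ S i) - v i (S i) ≤ ∑ j ∈ X, p j)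
    (x : ι → Finset α → ℝ)
    (hxnn : ∀ i T, 0 ≤ x i T)
    (hitem : ∀ j ∈ M, ∑ i, ∑ T ∈ M.powerset, (if j ∈ T then x i T else 0) ≤ 1)
    (hcons : ∀ i, ∑ T ∈ M.powerset, x i T ≤ 1) :
    2 * ∑ i, v i (S i) ≥ ∑ i, ∑ T ∈ M.powerset, x i T * v i T := by
  have hvS : ∀ i, 0 ≤ v i (S i) := fun i => hv0 i ▸ hmono i ∅ (S i) (empty_subset _) (hS i)
  have hwelfare : 0 ≤ ∑ i, v i (S i) := sum_nonneg fun i _ => hvS i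
  rcases subsingleton_or_nontrivial ι with hι | hι
  · have hM : ∀ i, M ⊆ S i := fun i =>
      hclear ▸ biUnion_subset.mpr fun k _ => (Subsingleton.elim k i ▸ subset_rfl)
    have hLP := configLP_le_dual M v x (fun i => v i (S i)) 0 hxnn hitem hcons hvS
      (fun _ _ => le_rfl) fun i T hT => by
        simpa using hmono i T (S i) (hT.trans (hM i)) (hS i)
    simp only [Pi.zero_apply, sum_const_zero, add_zero] at hLP
    linarith
  · have hp : ∀ j ∈ M, 0 ≤ p j := fun j hj => price_nonneg hS hmono hdisj hout hj
    have hLP := configLP_le_dual M v x (fun i => v i (S i)) p hxnn hitem hcons hvS hp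
      fun i T hT => value_le_value_add_price hS hmono hout hp i hT
    linarith [sum_price_le_welfare hclear hdisj hIR]

/-- Every conditional equilibrium achieves at least half of the optimal
fractional social welfare (the value of any feasible configuration-LP
solution). -/
theorem stmt11 {α ι : Type*} [DecidableEq α] [DecidableEq ι] [Fintype ι]
    (M : Finset α) (v : ι → Finset α → ℝ)
    (S : ι → Finset α) (p : α → ℝ)
    (hS : ∀ i, S i ⊆ M)
    (hmono : ∀ i, ∀ A B : Finset α, A ⊆ B → B ⊆ M → v i A ≤ v i B)
    (hv0 : ∀ i, v i ∅ = 0)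
    (hclear : Finset.univ.biUnion S = M)
    (hdisj : ∀ i j, i ≠ j → Disjoint (S i) (S j))
    (hIR : ∀ i, ∑ j ∈ S i, p j ≤ v i (S i))
    (hout : ∀ i, ∀ X ⊆ M \ S i, v i (X ∪ S i) - v i (S i) ≤ ∑ j ∈ X, p j)
    (x : ι → Finset α → ℝ)
    (hxnn : ∀ i T, 0 ≤ x i T)
    (hitem : ∀ j ∈ M, ∑ i, ∑ T ∈ M.powerset, (if j ∈ T then x i T else 0) ≤ 1)
    (hcons : ∀ i, ∑ T ∈ M.powerset, x i T ≤ 1) :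
    2 * ∑ i, v i (S i) ≥ ∑ i, ∑ T ∈ M.powerset, x i T * v i T :=
  stmt11_general M v S p hS hmono hv0 hclear hdisj hIR hout x hxnn hitem hcons
end

section
/- For submodular valuations, every locally optimal allocation S with prices p_j = v_{i(j)}({j} | S_{i(j)}\{j}) forms an E^SOM-endowment equilibrium, where g_SOM^X(Z) = Σ_{j∈Z} v({j} | X\{j}). In particular every market with submodular consumers admits an E^SOM-endowment equilibrium. -/
/-!
Prices on a consumer's own items equal her marginals, so the endowment bonus cancels the price
of every owned item she keeps, and her endowed utility from `Y` is `v Y - ∑_{j ∈ Y \ S} p j`.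
Local optimality says no consumer gains more from adding an item `j` to her bundle than its
owner loses by giving it up, i.e. the marginal value of `j` at `S` is at most `p j`. By
submodularity, `v Y ≤ v (S ∪ Y)` is at most `v S` plus the sum of these marginals over
`Y \ S`, hence at most `v S + ∑_{j ∈ Y \ S} p j`.
-/

open Finset

section Submodular

variable {α : Type*} [DecidableEq α] {v : Finset α → ℝ} {M : Finset α}

theorem le_add_sum_marginal_of_submodular
    (hsub : ∀ A B : Finset α, A ⊆ M → B ⊆ M → v A + v B ≥ v (A ∪ B) + v (A ∩ B))
    {A : Finset α} (hA : A ⊆ M) {T : Finset α} (hT : T ⊆ M) :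
    v (A ∪ T) ≤ v A + ∑ j ∈ T, (v (insert j A) - v A) := by
  induction T using Finset.induction_on with
  | empty => simp
  | @insert a T ha ih =>
    have hTM : T ⊆ M := (subset_insert a T).trans hT
    have haM : a ∈ M := hT (mem_insert_self a T)
    have hstep := hsub (A ∪ T) (insert a A) (union_subset hA hTM) (insert_subset haM hA)
    have hunion : A ∪ T ∪ insert a A = A ∪ insert a T := by
      ext x; simp only [mem_union, mem_insert]; tauto
    have hinter : (A ∪ T) ∩ insert a A = A := by
      ext x; simp only [mem_inter, mem_union, mem_insert]
      constructor
      · rintro ⟨hx | hx, rfl | hx'⟩ <;> first | assumption | exact absurd hx ha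
      · exact fun hx => ⟨Or.inl hx, Or.inr hx⟩
    rw [hunion, hinter] at hstep
    rw [sum_insert ha]
    linarith [ih hTM]

end Submodular

theorem marginal_le_price_of_locallyOptimal {α ι : Type*} [DecidableEq α] [Fintype ι]
    {M : Finset α} {v : ι → Finset α → ℝ} {S : ι → Finset α} {p : α → ℝ}
    (hclear : univ.biUnion S = M)
    (hlocal : ∀ i i', ∀ j ∈ S i,
      v i (S i) + v i' (S i') ≥ v i (S i \ {j}) + v i' (S i' ∪ {j}))
    (hp : ∀ i, ∀ j ∈ S i, p j = v i (insert j (S i \ {j})) - v i (S i \ {j}))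
    (i : ι) {j : α} (hj : j ∈ M) :
    v i (insert j (S i)) - v i (S i) ≤ p j := by
  obtain ⟨owner, -, hjo⟩ := mem_biUnion.mp (hclear ▸ hj)
  have hprice := hp owner j hjo
  rw [sdiff_singleton_eq_erase, insert_erase hjo] at hprice
  have hswap := hlocal owner i j hjo
  rw [union_singleton, sdiff_singleton_eq_erase] at hswap
  linarith

theorem stmt13_general {α ι : Type*} [DecidableEq α] [Fintype ι]
    (M : Finset α) (v : ι → Finset α → ℝ)
    (S : ι → Finset α) (p : α → ℝ)
    (hS : ∀ i, S i ⊆ M)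
    (hmono : ∀ i, ∀ A B : Finset α, A ⊆ B → B ⊆ M → v i A ≤ v i B)
    (hsub : ∀ i, ∀ A B : Finset α, A ⊆ M → B ⊆ M →
      v i A + v i B ≥ v i (A ∪ B) + v i (A ∩ B))
    (hclear : Finset.univ.biUnion S = M)
    (hlocal : ∀ i i', ∀ j ∈ S i,
      v i (S i) + v i' (S i') ≥ v i (S i \ {j}) + v i' (S i' ∪ {j}))
    (hp : ∀ i, ∀ j ∈ S i,
      p j = v i (insert j (S i \ {j})) - v i (S i \ {j})) :
    ∀ i, ∀ Y ⊆ M,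
      v i Y + (∑ j ∈ S i ∩ Y, (v i (insert j (S i \ {j})) - v i (S i \ {j})))
          - ∑ j ∈ Y, p j ≤
        v i (S i) + (∑ j ∈ S i, (v i (insert j (S i \ {j})) - v i (S i \ {j})))
          - ∑ j ∈ S i, p j := by
  intro i Y hY
  have hYdiff : Y \ S i ⊆ M := sdiff_subset.trans hY
  have hvalue : v i Y ≤ v i (S i) + ∑ j ∈ Y \ S i, p j :=
    calc v i Y ≤ v i (S i ∪ (Y \ S i)) :=
          hmono i _ _ (by rw [union_sdiff_self_eq_union]; exact subset_union_right)
            (union_subset (hS i) hYdiff)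
      _ ≤ v i (S i) + ∑ j ∈ Y \ S i, (v i (insert j (S i)) - v i (S i)) :=
          le_add_sum_marginal_of_submodular (hsub i) (hS i) hYdiff
      _ ≤ v i (S i) + ∑ j ∈ Y \ S i, p j := by
          gcongr with j hj
          exact marginal_le_price_of_locallyOptimal hclear hlocal hp i (hYdiff hj)
  have hown : ∑ j ∈ S i, (v i (insert j (S i \ {j})) - v i (S i \ {j})) = ∑ j ∈ S i, p j :=
    sum_congr rfl fun j hj => (hp i j hj).symm
  have hkept : ∑ j ∈ S i ∩ Y, (v i (insert j (S i \ {j})) - v i (S i \ {j})) =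
      ∑ j ∈ S i ∩ Y, p j :=
    sum_congr rfl fun j hj => (hp i j (mem_of_mem_inter_left hj)).symm
  have hsplit := sum_inter_add_sum_sdiff Y (S i) p
  rw [inter_comm] at hsplit
  linarith

/-- For submodular valuations, a locally optimal allocation with marginal
prices forms an endowment equilibrium under the sum-of-marginals (SOM)
endowment effect. -/
theorem stmt13 {α ι : Type*} [DecidableEq α] [DecidableEq ι] [Fintype ι]
    (M : Finset α) (v : ι → Finset α → ℝ)
    (S : ι → Finset α) (p : α → ℝ)
    (hS : ∀ i, S i ⊆ M)
    (hmono : ∀ i, ∀ A B : Finset α, A ⊆ B → B ⊆ M → v i A ≤ v i B)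
    (hsub : ∀ i, ∀ A B : Finset α, A ⊆ M → B ⊆ M →
      v i A + v i B ≥ v i (A ∪ B) + v i (A ∩ B))
    (hclear : Finset.univ.biUnion S = M)
    (hdisj : ∀ i j, i ≠ j → Disjoint (S i) (S j))
    (hlocal : ∀ i i', ∀ j ∈ S i,
      v i (S i) + v i' (S i') ≥ v i (S i \ {j}) + v i' (S i' ∪ {j}))
    (hp : ∀ i, ∀ j ∈ S i,
      p j = v i (insert j (S i \ {j})) - v i (S i \ {j})) :
    ∀ i, ∀ Y ⊆ M,
      v i Y + (∑ j ∈ S i ∩ Y, (v i (insert j (S i \ {j})) - v i (S i \ {j})))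
          - ∑ j ∈ Y, p j ≤
        v i (S i) + (∑ j ∈ S i, (v i (insert j (S i \ {j})) - v i (S i \ {j})))
          - ∑ j ∈ S i, p j :=
  stmt13_general M v S p hS hmono hsub hclear hlocal hp
end

section
/- For submodular v, the sum-of-marginals gain satisfies g_SOM^X(X) = Σ_{j∈X} v({j} | X\{j}) ≤ v(X) for every X ⊆ M. Consequently, every E^SOM-endowment equilibrium for submodular consumers gives at least half the optimal (fractional) social welfare. -/
/-!
Submodularity means marginal values diminish as the set grows, so the marginal value of `j` in
`X` is at most its marginal value in the part of `X` added before `j`; summing along any order of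
`X` telescopes to `v X`.

For the welfare bound, comparing the equilibrium bundle `S i` with `∅` and with any `T` shows
`v i T ≤ b i + p(T)` with `b i := 2 v i (S i) - p(S i) ≥ 0`, using that the gain is nonnegative
and at most `v i (S i)`. Weighting by a fractional allocation, the `b i` are paid at most once per
consumer and the prices at most once per item, and `∑ i, p(S i) = p(M)` since the `S i` partition
`M`.
-/

open Finset

section Submodular

variable {α : Type*} [DecidableEq α] {M : Finset α} {v : Finset α → ℝ}

lemma marginal_antitone_of_submodular
    (hsub : ∀ A B : Finset α, A ⊆ M → B ⊆ M → v A + v B ≥ v (A ∪ B) + v (A ∩ B))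
    {A B : Finset α} {j : α} (hAB : A ⊆ B) (hjB : j ∉ B) (hBM : insert j B ⊆ M) :
    v (insert j B) - v B ≤ v (insert j A) - v A := by
  have hunion : insert j A ∪ B = insert j B := by
    rw [insert_union, union_eq_right.mpr hAB]
  have hinter : insert j A ∩ B = A := by
    rw [insert_inter_of_notMem hjB, inter_eq_left.mpr hAB]
  have h := hsub (insert j A) B ((insert_subset_insert j hAB).trans hBM)
    ((subset_insert j B).trans hBM)
  rw [hunion, hinter] at h
  linarith

lemma sum_marginal_erase_le_of_submodular (hv0 : 0 ≤ v ∅)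
    (hsub : ∀ A B : Finset α, A ⊆ M → B ⊆ M → v A + v B ≥ v (A ∪ B) + v (A ∩ B)) :
    ∀ X ⊆ M, ∑ j ∈ X, (v X - v (X.erase j)) ≤ v X := by
  intro X
  induction X using Finset.induction_on with
  | empty => intro _; simpa using hv0
  | @insert a X ha ih =>
    intro haXM
    have hXM : X ⊆ M := (subset_insert a X).trans haXM
    have hdiminish : ∀ j ∈ X,
        v (insert a X) - v ((insert a X).erase j) ≤ v X - v (X.erase j) := by
      intro j hj
      have h := marginal_antitone_of_submodular hsub
        (erase_subset_erase j (subset_insert a X)) (notMem_erase j _)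
        (by rwa [insert_erase (mem_insert_of_mem hj)])
      rwa [insert_erase (mem_insert_of_mem hj), insert_erase hj] at h
    rw [sum_insert ha, erase_insert ha]
    linarith [sum_le_sum hdiminish, ih hXM]

lemma sum_marginal_le_of_submodular (hv0 : 0 ≤ v ∅)
    (hsub : ∀ A B : Finset α, A ⊆ M → B ⊆ M → v A + v B ≥ v (A ∪ B) + v (A ∩ B)) :
    ∀ X ⊆ M, ∑ j ∈ X, (v (insert j (X \ {j})) - v (X \ {j})) ≤ v X := by
  intro X hXM
  calc ∑ j ∈ X, (v (insert j (X \ {j})) - v (X \ {j}))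
      = ∑ j ∈ X, (v X - v (X.erase j)) := by
        refine sum_congr rfl fun j hj => ?_
        rw [sdiff_singleton_eq_erase, insert_erase hj]
    _ ≤ v X := sum_marginal_erase_le_of_submodular hv0 hsub X hXM

lemma sum_marginal_nonneg_of_monotone
    (hmono : ∀ A B : Finset α, A ⊆ B → B ⊆ M → v A ≤ v B) {S : Finset α} (hS : S ⊆ M)
    (Y : Finset α) : 0 ≤ ∑ j ∈ S ∩ Y, (v (insert j (S \ {j})) - v (S \ {j})) := by
  refine sum_nonneg fun j hj => sub_nonneg.mpr (hmono _ _ (subset_insert _ _) ?_)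
  exact insert_subset (hS (mem_inter.mp hj).1) (sdiff_subset.trans hS)

end Submodular

section Welfare

variable {α ι : Type*} {M : Finset α} {p : α → ℝ}

lemma value_le_of_endowment_optimal {v gain : Finset α → ℝ} {S : Finset α}
    (hv0 : 0 ≤ v ∅) (hgain : ∀ Y, 0 ≤ gain Y) (hgainS : gain S ≤ v S)
    (hopt : ∀ Y ⊆ M, v Y + gain Y - ∑ j ∈ Y, p j ≤ v S + gain S - ∑ j ∈ S, p j) :
    0 ≤ 2 * v S - ∑ j ∈ S, p j ∧
      ∀ Y ⊆ M, v Y ≤ (2 * v S - ∑ j ∈ S, p j) + ∑ j ∈ Y, p j := by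
  have hempty := hopt ∅ (empty_subset M)
  rw [sum_empty] at hempty
  refine ⟨by linarith [hgain ∅], fun Y hY => ?_⟩
  linarith [hopt Y hY, hgain Y]

variable [DecidableEq α] [Fintype ι] {x : ι → Finset α → ℝ}

lemma sum_fractional_price_le (hp : ∀ j, 0 ≤ p j)
    (hitem : ∀ j ∈ M, ∑ i, ∑ T ∈ M.powerset, (if j ∈ T then x i T else 0) ≤ 1) :
    ∑ i, ∑ T ∈ M.powerset, x i T * ∑ j ∈ T, p j ≤ ∑ j ∈ M, p j := by
  have hexpand : ∀ i, ∀ T ∈ M.powerset,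
      x i T * ∑ j ∈ T, p j = ∑ j ∈ M, (if j ∈ T then x i T else 0) * p j := by
    intro i T hT
    simp only [ite_mul, zero_mul, sum_ite_mem, inter_eq_right.mpr (mem_powerset.mp hT),
      mul_sum]
  calc ∑ i, ∑ T ∈ M.powerset, x i T * ∑ j ∈ T, p j
      = ∑ i, ∑ j ∈ M, ∑ T ∈ M.powerset, (if j ∈ T then x i T else 0) * p j :=
        sum_congr rfl fun i _ => (sum_congr rfl (hexpand i)).trans sum_comm
    _ = ∑ j ∈ M, (∑ i, ∑ T ∈ M.powerset, (if j ∈ T then x i T else 0)) * p j := by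
        rw [sum_comm]
        simp only [sum_mul]
    _ ≤ ∑ j ∈ M, 1 * p j :=
        sum_le_sum fun j hj => mul_le_mul_of_nonneg_right (hitem j hj) (hp j)
    _ = ∑ j ∈ M, p j := by simp only [one_mul]

/-- Weak LP duality for the fractional allocation LP. -/
lemma sum_fractional_welfare_le {v : ι → Finset α → ℝ} (b : ι → ℝ) (hb : ∀ i, 0 ≤ b i)
    (hp : ∀ j, 0 ≤ p j) (hval : ∀ i, ∀ T ⊆ M, v i T ≤ b i + ∑ j ∈ T, p j)
    (hxnn : ∀ i T, 0 ≤ x i T)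
    (hitem : ∀ j ∈ M, ∑ i, ∑ T ∈ M.powerset, (if j ∈ T then x i T else 0) ≤ 1)
    (hcons : ∀ i, ∑ T ∈ M.powerset, x i T ≤ 1) :
    ∑ i, ∑ T ∈ M.powerset, x i T * v i T ≤ ∑ i, b i + ∑ j ∈ M, p j := by
  have hconsumer : ∀ i, ∑ T ∈ M.powerset, x i T * b i ≤ b i := fun i => by
    rw [← sum_mul]
    exact mul_le_of_le_one_left (hb i) (hcons i)
  calc ∑ i, ∑ T ∈ M.powerset, x i T * v i T
      ≤ ∑ i, ∑ T ∈ M.powerset, x i T * (b i + ∑ j ∈ T, p j) :=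
        sum_le_sum fun i _ => sum_le_sum fun T hT =>
          mul_le_mul_of_nonneg_left (hval i T (mem_powerset.mp hT)) (hxnn i T)
    _ = ∑ i, ∑ T ∈ M.powerset, x i T * b i
          + ∑ i, ∑ T ∈ M.powerset, x i T * ∑ j ∈ T, p j := by
        simp only [mul_add, sum_add_distrib]
    _ ≤ ∑ i, b i + ∑ j ∈ M, p j :=
        add_le_add (sum_le_sum fun i _ => hconsumer i) (sum_fractional_price_le hp hitem)

end Welfare

theorem stmt14_general {α ι : Type*} [DecidableEq α] [Fintype ι]
    (M : Finset α) (v : ι → Finset α → ℝ)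
    (S : ι → Finset α) (p : α → ℝ)
    (hS : ∀ i, S i ⊆ M)
    (hmono : ∀ i, ∀ A B : Finset α, A ⊆ B → B ⊆ M → v i A ≤ v i B)
    (hv0 : ∀ i, v i ∅ = 0)
    (hsub : ∀ i, ∀ A B : Finset α, A ⊆ M → B ⊆ M →
      v i A + v i B ≥ v i (A ∪ B) + v i (A ∩ B))
    (hclear : Finset.univ.biUnion S = M)
    (hdisj : ∀ i j, i ≠ j → Disjoint (S i) (S j))
    (hp : ∀ j, 0 ≤ p j)
    (heq : ∀ i, ∀ Y ⊆ M,
      v i Y + (∑ j ∈ S i ∩ Y, (v i (insert j (S i \ {j})) - v i (S i \ {j})))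
          - ∑ j ∈ Y, p j ≤
        v i (S i) + (∑ j ∈ S i, (v i (insert j (S i \ {j})) - v i (S i \ {j})))
          - ∑ j ∈ S i, p j)
    (x : ι → Finset α → ℝ)
    (hxnn : ∀ i T, 0 ≤ x i T)
    (hitem : ∀ j ∈ M, ∑ i, ∑ T ∈ M.powerset, (if j ∈ T then x i T else 0) ≤ 1)
    (hcons : ∀ i, ∑ T ∈ M.powerset, x i T ≤ 1) :
    (∀ i, ∀ X ⊆ M,
      ∑ j ∈ X, (v i (insert j (X \ {j})) - v i (X \ {j})) ≤ v i X) ∧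
    2 * ∑ i, v i (S i) ≥ ∑ i, ∑ T ∈ M.powerset, x i T * v i T := by
  have hsom : ∀ i, ∀ X ⊆ M, ∑ j ∈ X, (v i (insert j (X \ {j})) - v i (X \ {j})) ≤ v i X :=
    fun i => sum_marginal_le_of_submodular (hv0 i).ge (hsub i)
  refine ⟨hsom, ?_⟩
  have hbound := fun i => value_le_of_endowment_optimal (S := S i) (hv0 i).ge
    (gain := fun Y => ∑ j ∈ S i ∩ Y, (v i (insert j (S i \ {j})) - v i (S i \ {j})))
    (sum_marginal_nonneg_of_monotone (hmono i) (hS i))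
    (by simpa only [inter_self] using hsom i (S i) (hS i))
    (fun Y hY => by simpa only [inter_self] using heq i Y hY)
  have hwelfare := sum_fractional_welfare_le (fun i => 2 * v i (S i) - ∑ j ∈ S i, p j)
    (fun i => (hbound i).1) hp (fun i => (hbound i).2) hxnn hitem hcons
  have hpartition : ∑ i, ∑ j ∈ S i, p j = ∑ j ∈ M, p j := by
    rw [← hclear, sum_biUnion fun i _ j _ hij => hdisj i j hij]
  rw [sum_sub_distrib, ← mul_sum, hpartition] at hwelfare
  linarith

/-- (a) For monotone submodular `v`, the SOM gain at the full set is at most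
`v(X)`. (b) Consequently, every SOM-endowment equilibrium for submodular
consumers achieves at least half the optimal fractional welfare. -/
theorem stmt14 {α ι : Type*} [DecidableEq α] [DecidableEq ι] [Fintype ι]
    (M : Finset α) (v : ι → Finset α → ℝ)
    (S : ι → Finset α) (p : α → ℝ)
    (hS : ∀ i, S i ⊆ M)
    (hmono : ∀ i, ∀ A B : Finset α, A ⊆ B → B ⊆ M → v i A ≤ v i B)
    (hv0 : ∀ i, v i ∅ = 0)
    (hsub : ∀ i, ∀ A B : Finset α, A ⊆ M → B ⊆ M →
      v i A + v i B ≥ v i (A ∪ B) + v i (A ∩ B))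
    (hclear : Finset.univ.biUnion S = M)
    (hdisj : ∀ i j, i ≠ j → Disjoint (S i) (S j))
    (hp : ∀ j, 0 ≤ p j)
    (heq : ∀ i, ∀ Y ⊆ M,
      v i Y + (∑ j ∈ S i ∩ Y, (v i (insert j (S i \ {j})) - v i (S i \ {j})))
          - ∑ j ∈ Y, p j ≤
        v i (S i) + (∑ j ∈ S i, (v i (insert j (S i \ {j})) - v i (S i \ {j})))
          - ∑ j ∈ S i, p j)
    (x : ι → Finset α → ℝ)
    (hxnn : ∀ i T, 0 ≤ x i T)
    (hitem : ∀ j ∈ M, ∑ i, ∑ T ∈ M.powerset, (if j ∈ T then x i T else 0) ≤ 1)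
    (hcons : ∀ i, ∑ T ∈ M.powerset, x i T ≤ 1) :
    (∀ i, ∀ X ⊆ M,
      ∑ j ∈ X, (v i (insert j (X \ {j})) - v i (X \ {j})) ≤ v i X) ∧
    2 * ∑ i, v i (S i) ≥ ∑ i, ∑ T ∈ M.powerset, x i T * v i T :=
  stmt14_general M v S p hS hmono hv0 hsub hclear hdisj hp heq x hxnn hitem hcons
end

section
/- Let (v_1,…,v_n) be monotone valuations, S an optimal (welfare-maximizing) allocation, and define item prices p_j = v_{i(j)}(S_{i(j)}) for each item j, where i(j) is the owner of j in S. Then (S, p) is an E^PROP-endowment equilibrium, where g_PROP^X(Z) = |Z|·v(X). In particular, every market (with arbitrary monotone valuations) admits an endowment equilibrium with optimal welfare under E^PROP. -/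
/-!
Let `i` deviate to a bundle `Y`. Giving `Y` to `i` on top of `S i`, and taking it away from
everybody else, is again an allocation, so by optimality the gain `v i Y - v i (S i)` is at most
the total loss `∑_{k ≠ i} (v k (S k) - v k (S k \ Y))`. Each bidder `k` who loses something loses
at most `v k (S k) ≤ #(S k ∩ Y) · v k (S k)`, which is exactly what `i` pays for the items of `Y`
taken from `k`. The endowment bonus `#(S i ∩ Y) · v i (S i)` is exactly what `i` pays for the
items of `Y` it already owns.
-/

open Finset Function

section

variable {α ι : Type*} [DecidableEq α]

theorem sum_price_eq_sum_card_inter_mul [Fintype ι] {S : ι → Finset α} {p : α → ℝ} {c : ι → ℝ}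
    {Y : Finset α} (hdisj : Pairwise (Disjoint on S)) (hY : Y ⊆ univ.biUnion S)
    (hp : ∀ k, ∀ j ∈ S k, p j = c k) :
    ∑ j ∈ Y, p j = ∑ k, ((S k ∩ Y).card : ℝ) * c k := by
  have hcover : Y = univ.biUnion fun k => S k ∩ Y := by
    rw [← biUnion_inter, inter_eq_right.mpr hY]
  conv_lhs => rw [hcover]
  rw [sum_biUnion fun k _ l _ hkl => (hdisj hkl).mono inter_subset_left inter_subset_left]
  refine sum_congr rfl fun k _ => ?_
  rw [sum_eq_card_nsmul fun j hj => hp k j (mem_inter.mp hj).1, nsmul_eq_mul]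

theorem sub_sdiff_le_card_inter_mul {v : Finset α → ℝ} {A Y : Finset α} (hA : 0 ≤ v A)
    (hAY : 0 ≤ v (A \ Y)) : v A - v (A \ Y) ≤ ((A ∩ Y).card : ℝ) * v A := by
  rcases (A ∩ Y).eq_empty_or_nonempty with hempty | hne
  · rw [sdiff_eq_self_of_disjoint (disjoint_iff_inter_eq_empty.mpr hempty), hempty]
    simp
  · have hcard : (1 : ℝ) ≤ (A ∩ Y).card := by exact_mod_cast hne.card_pos
    nlinarith

def giveTo [DecidableEq ι] (S : ι → Finset α) (i : ι) (Y : Finset α) : ι → Finset α :=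
  update (fun k => S k \ Y) i (S i ∪ Y)

section giveTo

variable [DecidableEq ι] {S : ι → Finset α} {i : ι} {Y : Finset α}

theorem giveTo_subset {M : Finset α} (hS : ∀ k, S k ⊆ M) (hY : Y ⊆ M) (k : ι) :
    giveTo S i Y k ⊆ M := by
  unfold giveTo
  rcases eq_or_ne k i with rfl | hki
  · simpa using union_subset (hS k) hY
  · simpa [hki] using sdiff_subset.trans (hS k)

theorem giveTo_pairwise_disjoint (hdisj : Pairwise (Disjoint on S)) :
    Pairwise (Disjoint on giveTo S i Y) := by
  have hother : ∀ l ≠ i, Disjoint (S i ∪ Y) (S l \ Y) := fun l hli =>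
    disjoint_union_left.mpr ⟨(hdisj hli.symm).mono_right sdiff_subset, disjoint_sdiff⟩
  intro k l hkl
  simp only [onFun, giveTo, update_apply]
  split_ifs with hk hl hl
  · exact absurd (hk.trans hl.symm) hkl
  · exact hother l hl
  · exact (hother k hk).symm
  · exact (hdisj hkl).mono sdiff_subset sdiff_subset

theorem sum_giveTo [Fintype ι] (v : ι → Finset α → ℝ) :
    ∑ k, v k (giveTo S i Y k) = v i (S i ∪ Y) + ∑ k ∈ univ \ {i}, v k (S k \ Y) := by
  simp only [giveTo, apply_update (fun k => v k)]
  exact sum_update_of_mem (mem_univ i) _ _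

end giveTo

end

theorem stmt15_general {α ι : Type*} [DecidableEq α] [Fintype ι]
    (M : Finset α) (v : ι → Finset α → ℝ)
    (S : ι → Finset α) (p : α → ℝ)
    (hS : ∀ i, S i ⊆ M)
    (hmono : ∀ i, ∀ A B : Finset α, A ⊆ B → B ⊆ M → v i A ≤ v i B)
    (hnn : ∀ i X, 0 ≤ v i X)
    (hclear : Finset.univ.biUnion S = M)
    (hdisj : ∀ i j, i ≠ j → Disjoint (S i) (S j))
    (hopt : ∀ S' : ι → Finset α, (∀ i, S' i ⊆ M) →
      (∀ i j, i ≠ j → Disjoint (S' i) (S' j)) →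
      ∑ i, v i (S' i) ≤ ∑ i, v i (S i))
    (hp : ∀ i, ∀ j ∈ S i, p j = v i (S i)) :
    ∀ i, ∀ Y ⊆ M,
      v i Y + ((S i ∩ Y).card : ℝ) * v i (S i) - ∑ j ∈ Y, p j ≤
        v i (S i) + ((S i).card : ℝ) * v i (S i) - ∑ j ∈ S i, p j := by
  classical
  intro i Y hY
  have hgain : v i Y ≤ v i (S i ∪ Y) := hmono i _ _ subset_union_right (union_subset (hS i) hY)
  have hwelfare : v i (S i ∪ Y) + ∑ k ∈ univ \ {i}, v k (S k \ Y) ≤ ∑ k, v k (S k) := by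
    rw [← sum_giveTo]
    exact hopt _ (giveTo_subset hS hY) fun k l hkl => giveTo_pairwise_disjoint hdisj hkl
  have hloss : ∑ k ∈ univ \ {i}, (v k (S k) - v k (S k \ Y)) ≤
      ∑ k ∈ univ \ {i}, ((S k ∩ Y).card : ℝ) * v k (S k) :=
    sum_le_sum fun k _ => sub_sdiff_le_card_inter_mul (hnn k _) (hnn k _)
  have hpriceY : ∑ j ∈ Y, p j = ∑ k, ((S k ∩ Y).card : ℝ) * v k (S k) :=
    sum_price_eq_sum_card_inter_mul hdisj (hclear ▸ hY) hp
  have hpriceSi : ∑ j ∈ S i, p j = ((S i).card : ℝ) * v i (S i) := by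
    rw [sum_eq_card_nsmul (hp i), nsmul_eq_mul]
  rw [sum_sub_distrib] at hloss
  rw [sum_eq_add_sum_sdiff_singleton_of_mem (mem_univ i)] at hwelfare hpriceY
  linarith

/-- For arbitrary monotone valuations, any optimal allocation with prices
`p_j = v_{i(j)}(S_{i(j)})` forms an endowment equilibrium under the
proportional endowment effect `g^X(Z) = |Z|·v(X)`. -/
theorem stmt15 {α ι : Type*} [DecidableEq α] [DecidableEq ι] [Fintype ι]
    (M : Finset α) (v : ι → Finset α → ℝ)
    (S : ι → Finset α) (p : α → ℝ)
    (hS : ∀ i, S i ⊆ M)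
    (hmono : ∀ i, ∀ A B : Finset α, A ⊆ B → B ⊆ M → v i A ≤ v i B)
    (hv0 : ∀ i, v i ∅ = 0)
    (hnn : ∀ i X, 0 ≤ v i X)
    (hclear : Finset.univ.biUnion S = M)
    (hdisj : ∀ i j, i ≠ j → Disjoint (S i) (S j))
    (hopt : ∀ S' : ι → Finset α, (∀ i, S' i ⊆ M) →
      (∀ i j, i ≠ j → Disjoint (S' i) (S' j)) →
      ∑ i, v i (S' i) ≤ ∑ i, v i (S i))
    (hp : ∀ i, ∀ j ∈ S i, p j = v i (S i)) :
    ∀ i, ∀ Y ⊆ M,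
      v i Y + ((S i ∩ Y).card : ℝ) * v i (S i) - ∑ j ∈ Y, p j ≤
        v i (S i) + ((S i).card : ℝ) * v i (S i) - ∑ j ∈ S i, p j :=
  stmt15_general M v S p hS hmono hnn hclear hdisj hopt hp
end

section
/- For m ≥ 3 items, consider the market with consumer 1 subadditive, v_1(M) = 2, v_1(∅) = 0, v_1(X) = 1 for all other X, and consumer 2 unit demand with v_2(X) = √(2/m) for all nonempty X. Then for any β with m > 2(β+1)², and any endowment environment E with g_i^X(X) ≤ β·v_i(X) for all i and X, no E-endowment equilibrium exists. -/
/-!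
Write `s = √(2/m)`, so that `m s² = 2`. If consumer 1 buys everything, consumer 2 must not want
any single item, so every price is at least `s` and `M` costs at least `m s`; individual
rationality of consumer 1 bounds that cost by `v₁ M + g₁ M M ≤ 2(1 + β)`. Otherwise consumer 1
would gain `1` in value by adding the rest `S₂ ≠ ∅` of the items, so `S₂` costs at least `1`,
while individual rationality of consumer 2 bounds its cost by `(1 + β) s`. Both cases give
`1 ≤ (1 + β) s`, that is `m ≤ 2(β + 1)²`.
-/

open Finset

def IsEndowedDemand {α : Type*} [DecidableEq α] (v : Finset α → ℝ) (g : Finset α → Finset α → ℝ)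
    (p : α → ℝ) (S M : Finset α) : Prop :=
  ∀ Y ⊆ M, v Y + g S (S ∩ Y) - ∑ j ∈ Y, p j ≤ v S + g S S - ∑ j ∈ S, p j

namespace IsEndowedDemand

variable {α : Type*} [DecidableEq α] {v : Finset α → ℝ} {g : Finset α → Finset α → ℝ}
  {p : α → ℝ} {S T M : Finset α}

theorem sum_le (h : IsEndowedDemand v g p S M) (hv : v ∅ = 0) (hg : g S ∅ = 0) :
    ∑ j ∈ S, p j ≤ v S + g S S := by
  have := h ∅ (empty_subset M)
  rw [inter_empty, hv, hg, sum_empty] at this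
  linarith

theorem sub_le_price (h : IsEndowedDemand v g p ∅ M) {j : α} (hj : j ∈ M) :
    v {j} - v ∅ ≤ p j := by
  have := h {j} (singleton_subset_iff.mpr hj)
  rw [empty_inter, sum_singleton, sum_empty] at this
  linarith

theorem card_mul_le_sum (h : IsEndowedDemand v g p ∅ M) {c : ℝ}
    (hc : ∀ j ∈ M, c ≤ v {j} - v ∅) : M.card * c ≤ ∑ j ∈ M, p j := by
  simpa only [nsmul_eq_mul] using
    card_nsmul_le_sum M p c fun j hj => (hc j hj).trans (h.sub_le_price hj)

theorem sub_le_sum_of_union (h : IsEndowedDemand v g p S M) (hdisj : Disjoint S T)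
    (hunion : S ∪ T = M) : v M - v S ≤ ∑ j ∈ T, p j := by
  have := h M subset_rfl
  rw [inter_eq_left.mpr (hunion ▸ subset_union_left), ← hunion, sum_union hdisj, hunion] at this
  linarith

end IsEndowedDemand

theorem one_le_mul_sqrt_of_mul_sqrt_le {m c : ℝ} (hm : 0 < m) (h : m * √(2 / m) ≤ 2 * c) :
    1 ≤ c * √(2 / m) := by
  have hsq : m * √(2 / m) ^ 2 = 2 := by
    rw [Real.sq_sqrt (by positivity)]
    field_simp
  nlinarith [Real.sqrt_nonneg (2 / m)]

theorem le_two_mul_sq_of_one_le_mul_sqrt {m c : ℝ} (hm : 0 < m) (h : 1 ≤ c * √(2 / m)) :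
    m ≤ 2 * c ^ 2 := by
  have hsq : 1 ≤ (c * √(2 / m)) ^ 2 := one_le_pow₀ h
  rw [mul_pow, Real.sq_sqrt (by positivity), mul_div_assoc', le_div_iff₀ hm] at hsq
  linarith

theorem stmt16_general {α : Type*} [DecidableEq α] (m : ℕ)
    (M : Finset α) (hcard : M.card = m)
    (β : ℝ) (hβ : (m : ℝ) > 2 * (β + 1) ^ 2)
    (v₁ v₂ : Finset α → ℝ)
    (hv₁ : ∀ X ⊆ M, v₁ X = if X = M then 2 else if X = ∅ then 0 else 1)
    (hv₂ : ∀ X ⊆ M, v₂ X = if X = ∅ then 0 else Real.sqrt (2 / m))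
    (g₁ g₂ : Finset α → Finset α → ℝ)
    (hg₁0 : ∀ X, g₁ X ∅ = 0) (hg₂0 : ∀ X, g₂ X ∅ = 0)
    (hg₁β : ∀ X ⊆ M, g₁ X X ≤ β * v₁ X)
    (hg₂β : ∀ X ⊆ M, g₂ X X ≤ β * v₂ X) :
    ¬ ∃ (S₁ S₂ : Finset α) (p : α → ℝ),
        S₁ ⊆ M ∧ S₂ ⊆ M ∧ Disjoint S₁ S₂ ∧ S₁ ∪ S₂ = M ∧
        (∀ Y ⊆ M, v₁ Y + g₁ S₁ (S₁ ∩ Y) - ∑ j ∈ Y, p j ≤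
          v₁ S₁ + g₁ S₁ S₁ - ∑ j ∈ S₁, p j) ∧
        (∀ Y ⊆ M, v₂ Y + g₂ S₂ (S₂ ∩ Y) - ∑ j ∈ Y, p j ≤
          v₂ S₂ + g₂ S₂ S₂ - ∑ j ∈ S₂, p j) := by
  rintro ⟨S₁, S₂, p, hS₁, hS₂, hdisj, hunion, h₁, h₂⟩
  have hm₀ : (0 : ℝ) < m := lt_of_le_of_lt (by positivity) hβ
  have hM : M ≠ ∅ := by
    rintro rfl
    simp [← hcard] at hm₀
  have hv₁₀ : v₁ ∅ = 0 := by simp [hv₁ ∅ (empty_subset M), hM.symm]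
  have hv₂₀ : v₂ ∅ = 0 := by simp [hv₂ ∅ (empty_subset M)]
  refine (le_two_mul_sq_of_one_le_mul_sqrt hm₀ ?_).not_gt hβ
  by_cases hS₁M : S₁ = M
  · subst hS₁M
    obtain rfl : S₂ = ∅ := hdisj.eq_bot_of_ge hS₂
    have hlow := hcard ▸ IsEndowedDemand.card_mul_le_sum h₂ (c := √(2 / m)) fun j hj => by
      simp [hv₂ {j} (singleton_subset_iff.mpr hj), hv₂₀]
    have hup := IsEndowedDemand.sum_le h₁ hv₁₀ (hg₁0 S₁)
    have hgain := hg₁β S₁ subset_rfl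
    rw [hv₁ S₁ subset_rfl, if_pos rfl] at hup hgain
    exact one_le_mul_sqrt_of_mul_sqrt_le hm₀ (by linarith)
  · have hS₂ne : S₂ ≠ ∅ := by
      rintro rfl
      exact hS₁M (by simpa using hunion)
    have hlow := IsEndowedDemand.sub_le_sum_of_union h₁ hdisj hunion
    have hv₁S₁ : v₁ S₁ ≤ 1 := by
      rw [hv₁ S₁ hS₁, if_neg hS₁M]
      split_ifs <;> norm_num
    have hup := IsEndowedDemand.sum_le h₂ hv₂₀ (hg₂0 S₂)
    have hgain := hg₂β S₂ hS₂
    rw [hv₂ S₂ hS₂, if_neg hS₂ne] at hup hgain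
    rw [hv₁ M subset_rfl, if_pos rfl] at hlow
    linarith

/-- Non-existence for subadditive valuations: in the market with one
subadditive and one unit-demand consumer, no endowment environment whose
gains are bounded by `β·v` with `m > 2(β+1)²` admits an endowment
equilibrium. -/
theorem stmt16 {α : Type*} [DecidableEq α] (m : ℕ) (hm : 3 ≤ m)
    (M : Finset α) (hcard : M.card = m)
    (β : ℝ) (hβ : (m : ℝ) > 2 * (β + 1) ^ 2)
    (v₁ v₂ : Finset α → ℝ)
    (hv₁ : ∀ X ⊆ M, v₁ X = if X = M then 2 else if X = ∅ then 0 else 1)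
    (hv₂ : ∀ X ⊆ M, v₂ X = if X = ∅ then 0 else Real.sqrt (2 / m))
    (g₁ g₂ : Finset α → Finset α → ℝ)
    (hg₁nn : ∀ X Z, 0 ≤ g₁ X Z) (hg₂nn : ∀ X Z, 0 ≤ g₂ X Z)
    (hg₁0 : ∀ X, g₁ X ∅ = 0) (hg₂0 : ∀ X, g₂ X ∅ = 0)
    (hg₁mono : ∀ X, ∀ Z ⊆ X, g₁ X Z ≤ g₁ X X)
    (hg₂mono : ∀ X, ∀ Z ⊆ X, g₂ X Z ≤ g₂ X X)
    (hg₁β : ∀ X ⊆ M, g₁ X X ≤ β * v₁ X)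
    (hg₂β : ∀ X ⊆ M, g₂ X X ≤ β * v₂ X) :
    ¬ ∃ (S₁ S₂ : Finset α) (p : α → ℝ),
        S₁ ⊆ M ∧ S₂ ⊆ M ∧ Disjoint S₁ S₂ ∧ S₁ ∪ S₂ = M ∧
        (∀ Y ⊆ M, v₁ Y + g₁ S₁ (S₁ ∩ Y) - ∑ j ∈ Y, p j ≤
          v₁ S₁ + g₁ S₁ S₁ - ∑ j ∈ S₁, p j) ∧
        (∀ Y ⊆ M, v₂ Y + g₂ S₂ (S₂ ∩ Y) - ∑ j ∈ Y, p j ≤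
          v₂ S₂ + g₂ S₂ S₂ - ∑ j ∈ S₂, p j) :=
  stmt16_general m M hcard β hβ v₁ v₂ hv₁ hv₂ g₁ g₂ hg₁0 hg₂0 hg₁β hg₂β
end

section
/- Let E be a significant endowment environment (g_i^X(X) ≥ v_i(X) for all i, X). Let S = (S_1,…,S_n) be any allocation and set bundle prices p_i ≤ g_i^{S_i}(S_i). Then for every consumer i and every set of indices A ⊆ [n] \ {i}, the endowed utility from the bundles indexed by A ∪ {i} is at least the endowed utility from the bundles indexed by A alone: v_i^{S_i}(∪_{k∈A∪{i}} S_k) - Σ_{k∈A∪{i}} p_k ≥ v_i^{S_i}(∪_{k∈A} S_k) - Σ_{k∈A} p_k. -/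
namespace Finset

variable {α ι : Type*} [DecidableEq α]

theorem inter_biUnion_insert_self [DecidableEq ι] (S : ι → Finset α) (i : ι) (A : Finset ι) :
    S i ∩ (insert i A).biUnion S = S i := by
  rw [biUnion_insert, inter_eq_left]
  exact subset_union_left

theorem inter_biUnion_eq_empty_of_notMem {S : ι → Finset α}
    (hdisj : ∀ i j, i ≠ j → Disjoint (S i) (S j)) {i : ι} {A : Finset ι} (hiA : i ∉ A) :
    S i ∩ A.biUnion S = ∅ :=
  disjoint_iff_inter_eq_empty.mp <| (disjoint_biUnion_right _ _ _).mpr fun k hk =>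
    hdisj i k fun hik => hiA (hik ▸ hk)

end Finset

open Finset in
theorem stmt17_general {α ι : Type*} [DecidableEq α] [DecidableEq ι]
    (M : Finset α) (v : ι → Finset α → ℝ) (S : ι → Finset α)
    (hS : ∀ i, S i ⊆ M)
    (hdisj : ∀ i j, i ≠ j → Disjoint (S i) (S j))
    (hmono : ∀ i, ∀ A B : Finset α, A ⊆ B → B ⊆ M → v i A ≤ v i B)
    (g : ι → Finset α → Finset α → ℝ)
    (hg0 : ∀ i X, g i X ∅ = 0)
    (q : ι → ℝ) (hq : ∀ i, q i ≤ g i (S i) (S i)) :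
    ∀ (i : ι) (A : Finset ι), i ∉ A →
      v i ((insert i A).biUnion S) + g i (S i) (S i ∩ (insert i A).biUnion S)
          - ∑ k ∈ insert i A, q k ≥
        v i (A.biUnion S) + g i (S i) (S i ∩ A.biUnion S) - ∑ k ∈ A, q k := by
  intro i A hiA
  -- Taking `S i` raises `v i` by monotonicity and the endowment term from `0` to `g i (S i) (S i) ≥ q i`.
  have hv : v i (A.biUnion S) ≤ v i ((insert i A).biUnion S) :=
    hmono i _ _ (biUnion_subset_biUnion_of_subset_left S (subset_insert i A))
      (biUnion_subset.mpr fun k _ => hS k)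
  rw [inter_biUnion_insert_self, inter_biUnion_eq_empty_of_notMem hdisj hiA, hg0,
    sum_insert hiA]
  linarith [hq i]

/-- No need to swap: under a significant endowment environment and bundle
prices `q_i ≤ g_i^{S_i}(S_i)`, adding one's own bundle to any set of other
bundles weakly improves endowed utility. -/
theorem stmt17 {α ι : Type*} [DecidableEq α] [DecidableEq ι]
    (M : Finset α) (v : ι → Finset α → ℝ) (S : ι → Finset α)
    (hS : ∀ i, S i ⊆ M)
    (hdisj : ∀ i j, i ≠ j → Disjoint (S i) (S j))
    (hmono : ∀ i, ∀ A B : Finset α, A ⊆ B → B ⊆ M → v i A ≤ v i B)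
    (g : ι → Finset α → Finset α → ℝ)
    (hg0 : ∀ i X, g i X ∅ = 0)
    (hsig : ∀ i X, v i X ≤ g i X X)
    (q : ι → ℝ) (hq : ∀ i, q i ≤ g i (S i) (S i)) :
    ∀ (i : ι) (A : Finset ι), i ∉ A →
      v i ((insert i A).biUnion S) + g i (S i) (S i ∩ (insert i A).biUnion S)
          - ∑ k ∈ insert i A, q k ≥
        v i (A.biUnion S) + g i (S i) (S i ∩ A.biUnion S) - ∑ k ∈ A, q k :=
  stmt17_general M v S hS hdisj hmono g hg0 q hq
end

section
/- Let (v_1,…,v_n) be monotone valuations, let S = (S_1,…,S_n) be a welfare-optimal allocation, and let E be a significant endowment environment. With bundling B = {S_1,…,S_n} and bundle prices p_i = v_i(S_i), the pair (S, p) is an E-endowment competitive bundling equilibrium: for every consumer i and every index set T ⊆ [n], v_i^{S_i}(∪_{j∈T} S_j) - Σ_{j∈T} p_j ≤ v_i^{S_i}(S_i) - p_i. -/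
/-!
Let `U = ⋃_{j ∈ T} S_j`. Handing `S_i ∪ U` to consumer `i` and nothing to the other members of
`T` is again an allocation, so optimality of `S` gives
`v_i(S_i ∪ U) ≤ v_i(S_i) + ∑_{j ∈ T \ {i}} v_j(S_j)`. Monotonicity bounds `v_i(U)` by the left-hand
side. If `i ∈ T` the endowment term is at most `g_i(S_i)`; if `i ∉ T` it vanishes, and the
missing price `v_i(S_i)` is paid for by significance, `v_i(S_i) ≤ g_i(S_i)`.
-/

open Finset

section Reallocation

variable {α ι : Type*} [DecidableEq α]

def IsWelfareOptimal [Fintype ι] (M : Finset α) (v : ι → Finset α → ℝ) (S : ι → Finset α) :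
    Prop :=
  ∀ S' : ι → Finset α, (∀ i, S' i ⊆ M) → (∀ i j, i ≠ j → Disjoint (S' i) (S' j)) →
    ∑ i, v i (S' i) ≤ ∑ i, v i (S i)

def absorbBundles [DecidableEq ι] (S : ι → Finset α) (i : ι) (T : Finset ι) : ι → Finset α :=
  Function.update (fun j => if j ∈ T then ∅ else S j) i (S i ∪ T.biUnion S)

section absorbBundles

variable {S : ι → Finset α} {i : ι} {T : Finset ι}

theorem union_biUnion_subset {M : Finset α} (hS : ∀ j, S j ⊆ M) : S i ∪ T.biUnion S ⊆ M :=
  union_subset (hS i) (biUnion_subset.mpr fun j _ => hS j)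

theorem disjoint_biUnion_of_notMem (hdisj : ∀ j k, j ≠ k → Disjoint (S j) (S k)) {k : ι}
    (hkT : k ∉ T) : Disjoint (T.biUnion S) (S k) :=
  (disjoint_biUnion_left _ _ _).mpr fun j hj => hdisj j k fun h => hkT (h ▸ hj)

theorem disjoint_union_biUnion_of_notMem
    (hdisj : ∀ j k, j ≠ k → Disjoint (S j) (S k)) {k : ι} (hki : k ≠ i) (hkT : k ∉ T) :
    Disjoint (S i ∪ T.biUnion S) (S k) :=
  disjoint_union_left.mpr ⟨hdisj i k hki.symm, disjoint_biUnion_of_notMem hdisj hkT⟩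

variable [DecidableEq ι]

theorem absorbBundles_subset {M : Finset α} (hS : ∀ j, S j ⊆ M) (j : ι) :
    absorbBundles S i T j ⊆ M := by
  unfold absorbBundles
  rcases eq_or_ne j i with rfl | hji
  · simpa using union_biUnion_subset hS
  · rw [Function.update_of_ne hji]
    split_ifs
    exacts [empty_subset M, hS j]

theorem absorbBundles_pairwiseDisjoint (hdisj : ∀ j k, j ≠ k → Disjoint (S j) (S k))
    (j k : ι) (hjk : j ≠ k) : Disjoint (absorbBundles S i T j) (absorbBundles S i T k) := by
  unfold absorbBundles
  rcases eq_or_ne j i with rfl | hji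
  · rw [Function.update_self, Function.update_of_ne hjk.symm]
    split_ifs with hkT
    exacts [disjoint_empty_right _, disjoint_union_biUnion_of_notMem hdisj hjk.symm hkT]
  rcases eq_or_ne k i with rfl | hki
  · rw [Function.update_self, Function.update_of_ne hjk]
    split_ifs with hjT
    exacts [disjoint_empty_left _, (disjoint_union_biUnion_of_notMem hdisj hjk hjT).symm]
  rw [Function.update_of_ne hji, Function.update_of_ne hki]
  split_ifs
  exacts [disjoint_empty_left _, disjoint_empty_left _, disjoint_empty_right _, hdisj j k hjk]

theorem sum_absorbBundles_add_sum_erase [Fintype ι] {v : ι → Finset α → ℝ}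
    (hv0 : ∀ j, v j ∅ = 0) :
    ∑ j, v j (absorbBundles S i T j) + ∑ j ∈ T.erase i, v j (S j) =
      ∑ j, v j (S j) + (v i (S i ∪ T.biUnion S) - v i (S i)) := by
  have hterm : ∀ j, v j (absorbBundles S i T j) + (if j ∈ T.erase i then v j (S j) else 0) =
      v j (S j) + (if j = i then v i (S i ∪ T.biUnion S) - v i (S i) else 0) := by
    intro j
    unfold absorbBundles
    rcases eq_or_ne j i with rfl | hji
    · simp
    · by_cases hjT : j ∈ T <;> simp [hji, hjT, hv0]
  have hsum := sum_congr rfl fun j (_ : j ∈ univ) => hterm j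
  rwa [sum_add_distrib, sum_add_distrib, Fintype.sum_ite_mem, Fintype.sum_ite_eq'] at hsum

end absorbBundles

theorem IsWelfareOptimal.le_add_sum_erase [DecidableEq ι] [Fintype ι] {M : Finset α}
    {v : ι → Finset α → ℝ} {S : ι → Finset α} (hopt : IsWelfareOptimal M v S) (hS : ∀ j, S j ⊆ M)
    (hdisj : ∀ j k, j ≠ k → Disjoint (S j) (S k)) (hv0 : ∀ j, v j ∅ = 0)
    (i : ι) (T : Finset ι) :
    v i (S i ∪ T.biUnion S) ≤ v i (S i) + ∑ j ∈ T.erase i, v j (S j) := by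
  have hwelfare := hopt (absorbBundles S i T) (absorbBundles_subset hS)
    (absorbBundles_pairwiseDisjoint hdisj)
  linarith [sum_absorbBundles_add_sum_erase (S := S) (i := i) (T := T) hv0]

end Reallocation

theorem stmt18_general {α ι : Type*} [DecidableEq α] [DecidableEq ι] [Fintype ι]
    (M : Finset α) (v : ι → Finset α → ℝ) (S : ι → Finset α)
    (hS : ∀ i, S i ⊆ M)
    (hdisj : ∀ i j, i ≠ j → Disjoint (S i) (S j))
    (hmono : ∀ i, ∀ A B : Finset α, A ⊆ B → B ⊆ M → v i A ≤ v i B)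
    (hv0 : ∀ i, v i ∅ = 0)
    (hopt : ∀ S' : ι → Finset α, (∀ i, S' i ⊆ M) →
      (∀ i j, i ≠ j → Disjoint (S' i) (S' j)) →
      ∑ i, v i (S' i) ≤ ∑ i, v i (S i))
    (g : ι → Finset α → Finset α → ℝ)
    (hg0 : ∀ i X, g i X ∅ = 0)
    (hgmono : ∀ i X, ∀ Z ⊆ X, g i X Z ≤ g i X X)
    (hsig : ∀ i X, v i X ≤ g i X X) :
    ∀ (i : ι) (T : Finset ι),
      v i (T.biUnion S) + g i (S i) (S i ∩ T.biUnion S) - ∑ j ∈ T, v j (S j) ≤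
        v i (S i) + g i (S i) (S i) - v i (S i) := by
  intro i T
  have hdev := IsWelfareOptimal.le_add_sum_erase hopt hS hdisj hv0 i T
  have hU : v i (T.biUnion S) ≤ v i (S i ∪ T.biUnion S) :=
    hmono i _ _ subset_union_right (union_biUnion_subset hS)
  by_cases hiT : i ∈ T
  · have hsum := (add_sum_erase T (fun j => v j (S j)) hiT).symm
    linarith [hgmono i (S i) (S i ∩ T.biUnion S) inter_subset_left]
  · have hinter : S i ∩ T.biUnion S = ∅ :=
      disjoint_iff_inter_eq_empty.mp (disjoint_biUnion_of_notMem hdisj hiT).symm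
    rw [erase_eq_of_notMem hiT] at hdev
    rw [hinter, hg0]
    linarith [hsig i (S i)]

/-- An optimal allocation, bundled with prices `p_i = v_i(S_i)`, forms an
endowment competitive bundling equilibrium for every significant endowment
environment. -/
theorem stmt18 {α ι : Type*} [DecidableEq α] [DecidableEq ι] [Fintype ι]
    (M : Finset α) (v : ι → Finset α → ℝ) (S : ι → Finset α)
    (hS : ∀ i, S i ⊆ M)
    (hclear : Finset.univ.biUnion S = M)
    (hdisj : ∀ i j, i ≠ j → Disjoint (S i) (S j))
    (hmono : ∀ i, ∀ A B : Finset α, A ⊆ B → B ⊆ M → v i A ≤ v i B)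
    (hv0 : ∀ i, v i ∅ = 0)
    (hnn : ∀ i X, 0 ≤ v i X)
    (hopt : ∀ S' : ι → Finset α, (∀ i, S' i ⊆ M) →
      (∀ i j, i ≠ j → Disjoint (S' i) (S' j)) →
      ∑ i, v i (S' i) ≤ ∑ i, v i (S i))
    (g : ι → Finset α → Finset α → ℝ)
    (hg0 : ∀ i X, g i X ∅ = 0)
    (hgmono : ∀ i X, ∀ Z ⊆ X, g i X Z ≤ g i X X)
    (hsig : ∀ i X, v i X ≤ g i X X) :
    ∀ (i : ι) (T : Finset ι),
      v i (T.biUnion S) + g i (S i) (S i ∩ T.biUnion S) - ∑ j ∈ T, v j (S j) ≤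
        v i (S i) + g i (S i) (S i) - v i (S i) :=
  stmt18_general M v S hS hdisj hmono hv0 hopt g hg0 hgmono hsig
end

section
/- Let (v_1,…,v_n) be monotone submodular valuations and S = (S_1,…,S_n) an allocation of all of M satisfying v_i(S_j | S_i) ≤ v_j(S_j) for all i, j ∈ [n]. Then for any significant endowment environment E, the bundling {S_1,…,S_n} with bundle prices p_i = v_i(S_i) together with S forms an E-endowment competitive bundling equilibrium. -/
/-!
Submodularity makes marginal values subadditive, so the marginal value to consumer `i` of any
union of other bundles is at most the sum of their marginal values, and each of these is at
most the price of that bundle by the hypothesis `v_i(S_j | S_i) ≤ v_j(S_j)`. Hence no union of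
bundles is worth more to `i` than its price plus `v_i(S_i)`. If `S_i` is among the purchased
bundles, its price `v_i(S_i)` pays for that surplus and the endowment gain is the full
`g_i(S_i)`; otherwise the gain is `g_i(∅) = 0` and significance `v_i(S_i) ≤ g_i(S_i)` pays
for it.
-/

namespace Finset

section Submodular

variable {α : Type*} [DecidableEq α] {M : Finset α} {f : Finset α → ℝ}

theorem submodular_union_union_add_le
    (hmono : ∀ A B : Finset α, A ⊆ B → B ⊆ M → f A ≤ f B)
    (hsub : ∀ A B : Finset α, A ⊆ M → B ⊆ M → f A + f B ≥ f (A ∪ B) + f (A ∩ B))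
    {A B C : Finset α} (hA : A ⊆ M) (hB : B ⊆ M) (hC : C ⊆ M) :
    f (A ∪ (B ∪ C)) + f A ≤ f (A ∪ B) + f (A ∪ C) := by
  have hAB : A ∪ B ⊆ M := union_subset hA hB
  have hAC : A ∪ C ⊆ M := union_subset hA hC
  have hinter : f A ≤ f ((A ∪ B) ∩ (A ∪ C)) :=
    hmono _ _ (subset_inter subset_union_left subset_union_left) (inter_subset_left.trans hAB)
  have h := hsub _ _ hAB hAC
  rw [← union_union_distrib_left] at h
  linarith

theorem submodular_union_biUnion_le {ι : Type*}
    (hmono : ∀ A B : Finset α, A ⊆ B → B ⊆ M → f A ≤ f B)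
    (hsub : ∀ A B : Finset α, A ⊆ M → B ⊆ M → f A + f B ≥ f (A ∪ B) + f (A ∩ B))
    {A : Finset α} (hA : A ⊆ M) (S : ι → Finset α) (T : Finset ι) (hS : ∀ j ∈ T, S j ⊆ M) :
    f (A ∪ T.biUnion S) ≤ f A + ∑ j ∈ T, (f (A ∪ S j) - f A) := by
  classical
  induction T using Finset.induction_on with
  | empty => simp
  | insert k T hk ih =>
    have hSk : S k ⊆ M := hS k (mem_insert_self k T)
    have hB : T.biUnion S ⊆ M := biUnion_subset.mpr fun j hj ↦ hS j (mem_insert_of_mem hj)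
    have hstep := submodular_union_union_add_le hmono hsub hA hSk hB
    rw [biUnion_insert, sum_insert hk]
    linarith [ih fun j hj ↦ hS j (mem_insert_of_mem hj)]

end Submodular

theorem union_biUnion_erase {α ι : Type*} [DecidableEq α] [DecidableEq ι]
    (S : ι → Finset α) (T : Finset ι) (i : ι) :
    S i ∪ (T.erase i).biUnion S = S i ∪ T.biUnion S := by
  by_cases hi : i ∈ T
  · conv_rhs => rw [← insert_erase hi, biUnion_insert, ← union_assoc, union_self]
  · rw [erase_eq_of_notMem hi]

end Finset

open Finset in
theorem stmt19_general {α ι : Type*} [DecidableEq α]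
    (M : Finset α) (v : ι → Finset α → ℝ) (S : ι → Finset α)
    (hS : ∀ i, S i ⊆ M)
    (hdisj : ∀ i j, i ≠ j → Disjoint (S i) (S j))
    (hmono : ∀ i, ∀ A B : Finset α, A ⊆ B → B ⊆ M → v i A ≤ v i B)
    (hsub : ∀ i, ∀ A B : Finset α, A ⊆ M → B ⊆ M →
      v i A + v i B ≥ v i (A ∪ B) + v i (A ∩ B))
    (hcond : ∀ i j, v i (S j ∪ S i) - v i (S i) ≤ v j (S j))
    (g : ι → Finset α → Finset α → ℝ)
    (hg0 : ∀ i X, g i X ∅ = 0)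
    (hsig : ∀ i X, v i X ≤ g i X X) :
    ∀ (i : ι) (T : Finset ι),
      v i (T.biUnion S) + g i (S i) (S i ∩ T.biUnion S) - ∑ j ∈ T, v j (S j) ≤
        v i (S i) + g i (S i) (S i) - v i (S i) := by
  classical
  intro i T
  have hsurplus : v i (S i ∪ T.biUnion S) ≤ v i (S i) + ∑ j ∈ T.erase i, v j (S j) := by
    rw [← union_biUnion_erase]
    refine (submodular_union_biUnion_le (hmono i) (hsub i) (hS i) S _ fun j _ ↦ hS j).trans ?_
    gcongr with j
    rw [union_comm]
    exact hcond i j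
  have hB : v i (T.biUnion S) ≤ v i (S i ∪ T.biUnion S) :=
    hmono i _ _ subset_union_right (union_subset (hS i) (biUnion_subset.mpr fun j _ ↦ hS j))
  by_cases hiT : i ∈ T
  · rw [inter_eq_left.mpr (subset_biUnion_of_mem S hiT), ← add_sum_erase _ _ hiT]
    linarith
  · have hempty : S i ∩ T.biUnion S = ∅ :=
      disjoint_iff_inter_eq_empty.mp <| (disjoint_biUnion_right _ _ _).mpr fun j hj ↦
        hdisj i j fun hij ↦ hiT (hij ▸ hj)
    rw [hempty, hg0]
    rw [erase_eq_of_notMem hiT] at hsurplus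
    linarith [hsig i (S i)]

/-- For monotone submodular valuations, an allocation of all items satisfying
`v_i(S_j | S_i) ≤ v_j(S_j)` for all `i, j`, bundled with prices
`p_i = v_i(S_i)`, forms an endowment competitive bundling equilibrium for
every significant endowment environment. -/
theorem stmt19 {α ι : Type*} [DecidableEq α] [DecidableEq ι] [Fintype ι]
    (M : Finset α) (v : ι → Finset α → ℝ) (S : ι → Finset α)
    (hS : ∀ i, S i ⊆ M)
    (hclear : Finset.univ.biUnion S = M)
    (hdisj : ∀ i j, i ≠ j → Disjoint (S i) (S j))
    (hmono : ∀ i, ∀ A B : Finset α, A ⊆ B → B ⊆ M → v i A ≤ v i B)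
    (hv0 : ∀ i, v i ∅ = 0)
    (hnn : ∀ i X, 0 ≤ v i X)
    (hsub : ∀ i, ∀ A B : Finset α, A ⊆ M → B ⊆ M →
      v i A + v i B ≥ v i (A ∪ B) + v i (A ∩ B))
    (hcond : ∀ i j, v i (S j ∪ S i) - v i (S i) ≤ v j (S j))
    (g : ι → Finset α → Finset α → ℝ)
    (hg0 : ∀ i X, g i X ∅ = 0)
    (hgmono : ∀ i X, ∀ Z ⊆ X, g i X Z ≤ g i X X)
    (hsig : ∀ i X, v i X ≤ g i X X) :
    ∀ (i : ι) (T : Finset ι),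
      v i (T.biUnion S) + g i (S i) (S i ∩ T.biUnion S) - ∑ j ∈ T, v j (S j) ≤
        v i (S i) + g i (S i) (S i) - v i (S i) :=
  stmt19_general M v S hS hdisj hmono hsub hcond g hg0 hsig
end
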